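/- arXiv:math/0703752 — 9 statements merged into one kernel-verified Lean document; each statement's English description precedes it below -/
import Mathlib

section
/- (Denjoy–Koksma inequality) If f : 𝕋 → ℝ is a function of bounded variation on the circle and qₙ is a denominator of a continued fraction convergent of the irrational α, then for every x ∈ 𝕋, |Σ_{k=0}^{qₙ−1} f(x + kα) − qₙ ∫_𝕋 f dλ| ≤ Var f. -/
/-!
Write `α = pₙ/qₙ + δ`. Since `pₙqₙ₊₁ - pₙ₊₁qₙ = ±1`, `pₙ` and `qₙ` are coprime, so `k ↦ kpₙ mod qₙ`
permutes `{0, …, qₙ - 1}`: modulo 1 the orbit points `x + kα`, `k < qₙ`, are the grid points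
`x + j/qₙ`, each displaced by `kδ`. As `|δ| < 1/(qₙqₙ₊₁)` and `qₙ ≤ qₙ₊₁`, all displacements have
the same sign and size at most `1/qₙ`, so after shifting the grid by at most `1/qₙ` each of the
`qₙ` cells of length `1/qₙ` of a unit interval contains exactly one orbit point. On a cell,
`|f(y) - qₙ ∫_cell f|` is at most the variation of `f` on the cell, and these variations add up
to the variation on the unit interval, which by periodicity is `Var f`.
-/

open MeasureTheory Set

theorem eVariationOn_Icc_add_Icc {α E : Type*} [LinearOrder α] [PseudoEMetricSpace E]
    (f : α → E) {a b c : α} (hab : a ≤ b) (hbc : b ≤ c) :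
    eVariationOn f (Icc a b) + eVariationOn f (Icc b c) = eVariationOn f (Icc a c) := by
  simpa using eVariationOn.Icc_add_Icc f (s := univ) hab hbc (mem_univ b)

namespace Function.Periodic

variable {E : Type*} {f : ℝ → E} {T : ℝ}

theorem eVariationOn_Icc_add [PseudoEMetricSpace E] (hf : Periodic f T) (a b : ℝ) :
    eVariationOn f (Icc (a + T) (b + T)) = eVariationOn f (Icc a b) := by
  have hmono : MonotoneOn (· + T) (Icc a b) := fun u _ v _ huv => by simpa using huv
  rw [← image_add_const_Icc, ← eVariationOn.comp_eq_of_monotoneOn f _ hmono]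
  exact congrArg (eVariationOn · _) (funext hf)

theorem eVariationOn_Icc_add_eq [PseudoEMetricSpace E] (hf : Periodic f T) (hT : 0 < T)
    (t s : ℝ) : eVariationOn f (Icc t (t + T)) = eVariationOn f (Icc s (s + T)) := by
  obtain ⟨m, ⟨hm₁, hm₂⟩, -⟩ := existsUnique_add_zsmul_mem_Ico hT s t
  set u := s + m • T
  calc eVariationOn f (Icc t (t + T))
      = eVariationOn f (Icc u (t + T)) + eVariationOn f (Icc (t + T) (u + T)) := by
        rw [hf.eVariationOn_Icc_add, add_comm (eVariationOn f _)]
        exact (eVariationOn_Icc_add_Icc f hm₁ hm₂.le).symm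
    _ = eVariationOn f (Icc u (u + T)) := eVariationOn_Icc_add_Icc f hm₂.le (by linarith)
    _ = eVariationOn f (Icc s (s + T)) := by
        rw [show u + T = s + T + m • T by ring, (hf.zsmul m).eVariationOn_Icc_add]

theorem apply_add_nat_mul_eq_mod (hf : Periodic f 1) (x α : ℝ) (k P Q : ℕ) :
    f (x + k * α) = f (x + (k * P % Q : ℕ) / Q + k * (α - P / Q)) := by
  rcases Q.eq_zero_or_pos with rfl | hQ
  · simp
  have hdiv : (Q : ℝ) * (k * P / Q : ℕ) + (k * P % Q : ℕ) = k * P := by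
    exact_mod_cast Nat.div_add_mod (k * P) Q
  rw [← hf.nat_mul (k * P / Q) (x + (k * P % Q : ℕ) / Q + k * (α - P / Q))]
  congr 1
  field_simp
  linear_combination -hdiv

end Function.Periodic

namespace BoundedVariationOn

variable {f : ℝ → ℝ}

theorem intervalIntegrable {a b : ℝ} (hf : BoundedVariationOn f (uIcc a b)) :
    IntervalIntegrable f volume a b := by
  obtain ⟨g, h, hg, hh, rfl⟩ := hf.locallyBoundedVariationOn.exists_monotoneOn_sub_monotoneOn
  exact hg.intervalIntegrable.sub hh.intervalIntegrable

theorem abs_sub_inv_mul_integral_le {c d y : ℝ} (hcd : c < d)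
    (hf : BoundedVariationOn f (Icc c d)) (hy : y ∈ Icc c d) :
    |f y - (d - c)⁻¹ * ∫ t in c..d, f t| ≤ (eVariationOn f (Icc c d)).toReal := by
  have hdc : 0 < d - c := sub_pos.2 hcd
  have hint : IntervalIntegrable f volume c d := intervalIntegrable (by rwa [uIcc_of_le hcd.le])
  have hdiff : f y - (d - c)⁻¹ * ∫ t in c..d, f t = (d - c)⁻¹ * ∫ t in c..d, (f y - f t) := by
    rw [intervalIntegral.integral_sub intervalIntegrable_const hint,
      intervalIntegral.integral_const, smul_eq_mul]
    field_simp
  have hbound : ∀ t ∈ uIoc c d, ‖f y - f t‖ ≤ (eVariationOn f (Icc c d)).toReal := fun t ht =>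
    hf.dist_le hy (Ioc_subset_Icc_self (uIoc_of_le hcd.le ▸ ht))
  rw [hdiff, abs_mul, abs_inv, abs_of_pos hdc, inv_mul_le_iff₀ hdc, mul_comm]
  simpa [abs_of_pos hdc] using intervalIntegral.norm_integral_le_of_norm_le_const hbound

theorem abs_sum_sub_mul_integral_le {x : ℝ} (hf : BoundedVariationOn f (Icc x (x + 1)))
    {Q : ℕ} (j : ℕ → ℕ) (hj : BijOn j (Finset.range Q : Set ℕ) (Finset.range Q)) (y : ℕ → ℝ)
    (hy : ∀ k < Q, y k ∈ Icc (x + j k / Q) (x + j k / Q + 1 / Q)) :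
    |∑ k ∈ Finset.range Q, f (y k) - Q * ∫ t in x..x + 1, f t| ≤
      (eVariationOn f (Icc x (x + 1))).toReal := by
  obtain rfl | hQ := Nat.eq_zero_or_pos Q
  · simp
  have hQ' : (0 : ℝ) < Q := Nat.cast_pos.2 hQ
  set c : ℕ → ℝ := fun i => x + i / Q with hc
  have hc_mono : Monotone c := fun i i' h => by simp only [hc]; gcongr
  have hc_succ (i : ℕ) : c (i + 1) = c i + 1 / Q := by simp only [hc]; push_cast; ring
  have hc_ends : c 0 = x ∧ c Q = x + 1 := by simp [hc, hQ'.ne']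
  have hcell : ∀ i < Q, BoundedVariationOn f (Icc (c i) (c (i + 1))) := fun i hi => by
    have hsub := Icc_subset_Icc (hc_mono (Nat.zero_le i)) (hc_mono hi)
    rw [hc_ends.1, hc_ends.2] at hsub
    exact hf.mono hsub
  have hint : ∀ i < Q, IntervalIntegrable f volume (c i) (c (i + 1)) := fun i hi =>
    intervalIntegrable (by rw [uIcc_of_le (hc_mono i.le_succ)]; exact hcell i hi)
  have hreindex (g : ℕ → ℝ) : ∑ k ∈ Finset.range Q, g (j k) = ∑ i ∈ Finset.range Q, g i :=
    Finset.sum_nbij j (fun k hk => hj.mapsTo hk) hj.injOn hj.surjOn fun _ _ => rfl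
  have hterm : ∀ k < Q, |f (y k) - Q * ∫ t in c (j k)..c (j k + 1), f t| ≤
      (eVariationOn f (Icc (c (j k)) (c (j k + 1)))).toReal := fun k hk => by
    have hjk : j k < Q := Finset.mem_range.1 (hj.mapsTo (Finset.mem_range.2 hk))
    have h := (hcell _ hjk).abs_sub_inv_mul_integral_le
      (by rw [hc_succ]; simpa using hQ') (by rw [hc_succ]; exact hy k hk)
    rwa [hc_succ (j k), add_sub_cancel_left, one_div, inv_inv, ← one_div, ← hc_succ] at h
  have hintegral : Q * ∫ t in x..x + 1, f t =
      ∑ k ∈ Finset.range Q, Q * ∫ t in c (j k)..c (j k + 1), f t := by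
    rw [hreindex fun i => Q * ∫ t in c i..c (i + 1), f t, ← Finset.mul_sum,
      intervalIntegral.sum_integral_adjacent_intervals hint, hc_ends.1, hc_ends.2]
  have hvariation : ∑ k ∈ Finset.range Q, (eVariationOn f (Icc (c (j k)) (c (j k + 1)))).toReal =
      (eVariationOn f (Icc x (x + 1))).toReal := by
    rw [hreindex fun i => (eVariationOn f (Icc (c i) (c (i + 1)))).toReal,
      ← ENNReal.toReal_sum fun i hi => hcell i (Finset.mem_range.1 hi),
      eVariationOn.sum' f hc_mono, hc_ends.1, hc_ends.2]
  rw [hintegral, ← Finset.sum_sub_distrib, ← hvariation]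
  exact (Finset.abs_sum_le_sum_abs _ _).trans
    (Finset.sum_le_sum fun k hk => hterm k (Finset.mem_range.1 hk))

end BoundedVariationOn

theorem exists_forall_add_nat_mul_mem_Icc {Q : ℕ} {δ r : ℝ} (hδ : ∀ k < Q, k * |δ| ≤ r)
    (x : ℝ) : ∃ x', ∀ k < Q, x + k * δ ∈ Icc x' (x' + r) := by
  rcases le_total 0 δ with hδ₀ | hδ₀
  · refine ⟨x, fun k hk => ⟨?_, ?_⟩⟩
    · nlinarith [(k.cast_nonneg : (0 : ℝ) ≤ k)]
    · linarith [abs_of_nonneg hδ₀ ▸ hδ k hk]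
  · refine ⟨x - r, fun k hk => ⟨?_, ?_⟩⟩
    · linarith [abs_of_nonpos hδ₀ ▸ hδ k hk]
    · nlinarith [(k.cast_nonneg : (0 : ℝ) ≤ k), hδ k hk, abs_nonneg δ]

theorem Nat.Coprime.bijOn_mul_mod {p q : ℕ} (h : Nat.Coprime p q) :
    BijOn (fun k => k * p % q) (Finset.range q : Set ℕ) (Finset.range q) := by
  have hmaps : MapsTo (fun k => k * p % q) (Finset.range q : Set ℕ) (Finset.range q) :=
    fun k hk => Finset.mem_range.2 (Nat.mod_lt _ (Nat.zero_lt_of_lt (Finset.mem_range.1 hk)))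
  refine ((Finset.range q).finite_toSet.injOn_iff_bijOn_of_mapsTo hmaps).1
    fun k hk k' hk' hkk' => ?_
  exact Nat.ModEq.eq_of_lt_of_lt (Nat.ModEq.cancel_right_of_coprime h.symm hkk')
    (Finset.mem_range.1 hk) (Finset.mem_range.1 hk')

section Continuants

variable {a p q : ℕ → ℕ}

theorem continuant_pos_and_le_succ (ha : ∀ n, 1 ≤ n → 1 ≤ a n) (hq0 : q 0 = 1)
    (hq1 : q 1 = a 1) (hqrec : ∀ n, q (n + 2) = a (n + 2) * q (n + 1) + q n) (n : ℕ) :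
    0 < q n ∧ q n ≤ q (n + 1) := by
  induction n with
  | zero => rw [hq0, hq1]; exact ⟨one_pos, ha 1 le_rfl⟩
  | succ n ih =>
    refine ⟨ih.1.trans_le ih.2, ?_⟩
    rw [hqrec n]
    nlinarith [ha (n + 2) (by omega)]

theorem continuant_det (hp0 : p 0 = 0) (hp1 : p 1 = 1)
    (hprec : ∀ n, p (n + 2) = a (n + 2) * p (n + 1) + p n) (hq0 : q 0 = 1)
    (hqrec : ∀ n, q (n + 2) = a (n + 2) * q (n + 1) + q n) (n : ℕ) :
    (p (n + 1) : ℤ) * q n - p n * q (n + 1) = (-1) ^ n := by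
  induction n with
  | zero => simp [hp0, hp1, hq0]
  | succ n ih =>
    rw [hprec, hqrec]
    push_cast
    linear_combination (-1 : ℤ) * ih

theorem continuant_coprime (hp0 : p 0 = 0) (hp1 : p 1 = 1)
    (hprec : ∀ n, p (n + 2) = a (n + 2) * p (n + 1) + p n) (hq0 : q 0 = 1)
    (hqrec : ∀ n, q (n + 2) = a (n + 2) * q (n + 1) + q n) (n : ℕ) : Nat.Coprime (p n) (q n) :=
  Nat.isCoprime_iff_coprime.1 ⟨-(-1) ^ n * q (n + 1), (-1) ^ n * p (n + 1), by
    linear_combination (-1) ^ n * continuant_det hp0 hp1 hprec hq0 hqrec n +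
      (Even.neg_one_pow (even_two_mul n) : ((-1 : ℤ) ^ (2 * n)) = 1)⟩

end Continuants

theorem stmt2_general (α : ℝ) (a : ℕ → ℕ) (p q : ℕ → ℕ)
    (ha : ∀ n, 1 ≤ n → 1 ≤ a n)
    (hq0 : q 0 = 1) (hq1 : q 1 = a 1) (hqrec : ∀ n, q (n + 2) = a (n + 2) * q (n + 1) + q n)
    (hp0 : p 0 = 0) (hp1 : p 1 = 1) (hprec : ∀ n, p (n + 2) = a (n + 2) * p (n + 1) + p n)
    (happrox : ∀ n, 1 / (2 * (q n : ℝ) * q (n + 1)) < |α - (p n : ℝ) / q n| ∧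
      |α - (p n : ℝ) / q n| < 1 / ((q n : ℝ) * q (n + 1)))
    (f : ℝ → ℝ) (hper : Function.Periodic f 1)
    (hBV : BoundedVariationOn f (Set.Icc 0 1)) :
    ∀ n, ∀ x : ℝ,
      |∑ k ∈ Finset.range (q n), f (x + k * α) - (q n : ℝ) * ∫ t in (0:ℝ)..1, f t| ≤
        (eVariationOn f (Set.Icc 0 1)).toReal := by
  intro n x
  obtain ⟨hq, hq_le⟩ := continuant_pos_and_le_succ ha hq0 hq1 hqrec n
  have hqR : (0 : ℝ) < q n := Nat.cast_pos.2 hq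
  have hq_leR : (q n : ℝ) ≤ q (n + 1) := Nat.cast_le.2 hq_le
  set δ := α - p n / q n
  have hδ : ∀ k < q n, k * |δ| ≤ 1 / q n := fun k hk => by
    have hδ_lt := (happrox n).2
    rw [lt_div_iff₀ (mul_pos hqR (hqR.trans_le hq_leR))] at hδ_lt
    have hk : (k : ℝ) ≤ q n := Nat.cast_le.2 hk.le
    rw [le_div_iff₀ hqR]
    nlinarith [abs_nonneg δ]
  obtain ⟨x', hx'⟩ := exists_forall_add_nat_mul_mem_Icc hδ x
  have hBV' : BoundedVariationOn f (Icc x' (x' + 1)) := by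
    rwa [BoundedVariationOn, hper.eVariationOn_Icc_add_eq one_pos x' 0, zero_add]
  have key := hBV'.abs_sum_sub_mul_integral_le _
    (continuant_coprime hp0 hp1 hprec hq0 hqrec n).bijOn_mul_mod
    (fun k => x + (k * p n % q n : ℕ) / q n + k * δ) fun k hk => by
      obtain ⟨h₁, h₂⟩ := hx' k hk
      constructor <;> linarith
  rwa [hper.intervalIntegral_add_eq x' 0, hper.eVariationOn_Icc_add_eq one_pos x' 0, zero_add,
    ← Finset.sum_congr rfl fun k _ => hper.apply_add_nat_mul_eq_mod x α k (p n) (q n)] at key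

/-- Denjoy–Koksma inequality: if f : 𝕋 → ℝ (represented by a 1-periodic
function on ℝ) has bounded variation on the circle and qₙ is a denominator of a
continued fraction convergent of the irrational α, then for every x,
|Σ_{k=0}^{qₙ−1} f(x + kα) − qₙ ∫ f| ≤ Var f. -/
theorem stmt2 (α : ℝ) (hα : Irrational α) (a : ℕ → ℕ) (p q : ℕ → ℕ)
    (ha : ∀ n, 1 ≤ n → 1 ≤ a n)
    (hq0 : q 0 = 1) (hq1 : q 1 = a 1) (hqrec : ∀ n, q (n + 2) = a (n + 2) * q (n + 1) + q n)
    (hp0 : p 0 = 0) (hp1 : p 1 = 1) (hprec : ∀ n, p (n + 2) = a (n + 2) * p (n + 1) + p n)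
    (happrox : ∀ n, 1 / (2 * (q n : ℝ) * q (n + 1)) < |α - (p n : ℝ) / q n| ∧
      |α - (p n : ℝ) / q n| < 1 / ((q n : ℝ) * q (n + 1)))
    (f : ℝ → ℝ) (hper : Function.Periodic f 1)
    (hBV : BoundedVariationOn f (Set.Icc 0 1)) :
    ∀ n, ∀ x : ℝ,
      |∑ k ∈ Finset.range (q n), f (x + k * α) - (q n : ℝ) * ∫ t in (0:ℝ)..1, f t| ≤
        (eVariationOn f (Set.Icc 0 1)).toReal :=
  stmt2_general α a p q ha hq0 hq1 hqrec hp0 hp1 hprec happrox f hper hBV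
end

section
/- Let α be irrational with bounded partial quotients. Then there exist constants C₁, C₂ > 0 such that for each m ∈ ℕ, every interval I in the partition of the circle determined by the points 0, −α, …, −(m−1)α satisfies C₁/m ≤ |I| ≤ C₂/m. -/
/-!
Let `qₙ, pₙ` be the continued-fraction denominators and numerators of `α` and `εₙ = qₙα - pₙ`,
so that `|εₙ| ≤ 1/qₙ₊₁`; bounded partial quotients give `qₙ₊₁ ≤ K qₙ`.

Separation: a fraction `p/d` differs from one of two consecutive convergents `pₙ/qₙ`, and then
`1 ≤ |d pₙ - qₙ p| ≤ |d| |εₙ| + qₙ |dα - p|`. Choosing `qₙ ≤ 2|d| < qₙ₊₁` makes the first term at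
most `1/2`, whence `|dα - p| ≥ 1/(2qₙ₊₁) ≥ 1/(4K|d|)`.

Covering: `(qₙ, εₙ)` and `(qₙ₊₁, εₙ₊₁)` are linearly independent, so every `x` can be written as
`-(a εₙ + b εₙ₊₁)` with `a qₙ + b qₙ₊₁` prescribed; rounding `a` and `b` down yields some
`j < qₙ + qₙ₊₁` with `‖x + jα‖ ≤ |εₙ| + |εₙ₊₁| ≤ 2/qₙ₊₁`. Take `qₙ ≤ m/(K+1) < qₙ₊₁`.
-/

/-- Distance from a real number to the nearest integer (= distance on the circle ℝ/ℤ). -/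
noncomputable def distNearestInt (x : ℝ) : ℝ := |x - round x|

open GenContFract

namespace GenContFract

theorem contsAux_mem_of_mem {K : Type*} [DivisionRing K] {g : GenContFract K} {S : Subring K}
    (hh : g.h ∈ S) (hs : ∀ n gp, g.s.get? n = some gp → gp.a ∈ S ∧ gp.b ∈ S) :
    ∀ n, (g.contsAux n).a ∈ S ∧ (g.contsAux n).b ∈ S
  | 0 => ⟨S.one_mem, S.zero_mem⟩
  | 1 => ⟨hh, S.one_mem⟩
  | n + 2 => by
    have ih₀ := contsAux_mem_of_mem hh hs n
    have ih₁ := contsAux_mem_of_mem hh hs (n + 1)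
    rcases hgp : g.s.get? n with _ | gp
    · rwa [contsAux_stable_step_of_terminated hgp]
    · obtain ⟨ha, hb⟩ := hs n gp hgp
      rw [contsAux_recurrence hgp rfl rfl]
      exact ⟨add_mem (mul_mem hb ih₁.1) (mul_mem ha ih₀.1),
        add_mem (mul_mem hb ih₁.2) (mul_mem ha ih₀.2)⟩

variable {K : Type*} [Field K] [LinearOrder K] [FloorRing K] (v : K) (n : ℕ)

theorem of_contsAux_mem_range_intCast :
    ((GenContFract.of v).contsAux n).a ∈ (Int.castRingHom K).range ∧
      ((GenContFract.of v).contsAux n).b ∈ (Int.castRingHom K).range :=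
  contsAux_mem_of_mem (RingHom.mem_range.2 ⟨⌊v⌋, rfl⟩) (fun _ _ h ↦ by
    obtain ⟨ha, z, hz⟩ := of_partNum_eq_one_and_exists_int_partDen_eq h
    exact ⟨ha ▸ one_mem _, hz ▸ RingHom.mem_range.2 ⟨z, rfl⟩⟩) n

theorem exists_intCast_eq_of_nums : ∃ z : ℤ, (z : K) = (GenContFract.of v).nums n :=
  (of_contsAux_mem_range_intCast v (n + 1)).1

theorem exists_intCast_eq_of_dens : ∃ z : ℤ, (z : K) = (GenContFract.of v).dens n :=
  (of_contsAux_mem_range_intCast v (n + 1)).2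

end GenContFract

theorem one_le_abs_mul_add_abs_mul_of_ne (α : ℝ) {d p Q P : ℤ} (h : d * P ≠ Q * p) :
    1 ≤ |(d : ℝ)| * |Q * α - P| + |(Q : ℝ)| * |d * α - p| := calc
  (1 : ℝ) ≤ |((d * P - Q * p : ℤ) : ℝ)| := mod_cast Int.one_le_abs (sub_ne_zero.2 h)
  _ = |Q * (d * α - p) - d * (Q * α - P)| := by push_cast; ring_nf
  _ ≤ _ := by rw [add_comm, ← abs_mul, ← abs_mul]; exact abs_sub _ _

theorem exists_distNearestInt_add_mul_le (α x : ℝ) {q q' p p' : ℤ} (hq : 0 < q) (hq' : 0 ≤ q')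
    (hdet : q * p' ≠ q' * p) :
    ∃ j : ℕ, (j : ℤ) < q + q' ∧ distNearestInt (x + j * α) ≤ |q * α - p| + |q' * α - p'| := by
  set ε := (q : ℝ) * α - p with hε
  set ε' := (q' : ℝ) * α - p' with hε'
  have hD : (q : ℝ) * ε' - q' * ε ≠ 0 := by
    have : ((q' * p - q * p' : ℤ) : ℝ) ≠ 0 := mod_cast sub_ne_zero.2 hdet.symm
    convert this using 1; push_cast; ring
  -- solve `a q + b q' = q + q' - 1` and `x + a ε + b ε' = 0` by Cramer's rule, then round down
  set J : ℝ := q + q' - 1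
  set a := (J * ε' + q' * x) / (q * ε' - q' * ε)
  set b := (-(q * x) - J * ε) / (q * ε' - q' * ε)
  have hj : a * q + b * q' = J := by
    simp only [a, b]
    rw [div_mul_eq_mul_div, div_mul_eq_mul_div, ← add_div, div_eq_iff hD]; ring
  have hx : x + a * ε + b * ε' = 0 := by
    simp only [a, b]
    rw [div_mul_eq_mul_div, div_mul_eq_mul_div, add_assoc, ← add_div, add_div' _ _ _ hD,
      div_eq_zero_iff]
    left; ring
  have hqR : (0 : ℝ) < q := mod_cast hq
  have hq'R : (0 : ℝ) ≤ q' := mod_cast hq'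
  have hlo : (-1 : ℝ) < ((⌊a⌋ * q + ⌊b⌋ * q' : ℤ) : ℝ) := by
    push_cast
    nlinarith [Int.sub_one_lt_floor a, Int.sub_one_lt_floor b]
  have hhi : ((⌊a⌋ * q + ⌊b⌋ * q' : ℤ) : ℝ) ≤ J := by
    push_cast
    nlinarith [Int.floor_le a, Int.floor_le b]
  obtain ⟨j, hj⟩ : ∃ j : ℕ, (j : ℤ) = ⌊a⌋ * q + ⌊b⌋ * q' :=
    ⟨_, Int.toNat_of_nonneg (by have : (-1 : ℤ) < _ := (by exact_mod_cast hlo); omega)⟩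
  refine ⟨j, ?_, ?_⟩
  · have : ((j : ℤ) : ℝ) ≤ ((q + q' - 1 : ℤ) : ℝ) := by rw [hj]; push_cast at hhi ⊢; exact hhi
    have : (j : ℤ) ≤ q + q' - 1 := mod_cast this
    omega
  · have hjR : (j : ℝ) = ⌊a⌋ * q + ⌊b⌋ * q' := by exact_mod_cast hj
    calc distNearestInt (x + j * α)
        ≤ |x + j * α - ((⌊a⌋ * p + ⌊b⌋ * p' : ℤ) : ℝ)| := round_le _ _
      _ = |Int.fract a * ε + Int.fract b * ε'| := by
        rw [← abs_neg, Int.fract, Int.fract, hjR]; push_cast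
        congr 1; linear_combination -hx + ⌊a⌋ * hε + ⌊b⌋ * hε'
      _ ≤ Int.fract a * |ε| + Int.fract b * |ε'| := by
        refine (abs_add_le _ _).trans_eq ?_
        rw [abs_mul, abs_mul, abs_of_nonneg (Int.fract_nonneg a),
          abs_of_nonneg (Int.fract_nonneg b)]
      _ ≤ |ε| + |ε'| := add_le_add (mul_le_of_le_one_left (abs_nonneg _) (Int.fract_lt_one a).le)
          (mul_le_of_le_one_left (abs_nonneg _) (Int.fract_lt_one b).le)

namespace Irrational

variable {α : ℝ}

theorem not_terminatedAt_of (hα : Irrational α) (n : ℕ) :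
    ¬(GenContFract.of α).TerminatedAt n := fun h ↦ by
  obtain ⟨q, hq⟩ := (terminates_iff_rat α).1 ⟨n, h⟩
  exact hα ⟨q, hq.symm⟩

theorem fib_succ_le_dens (hα : Irrational α) (n : ℕ) :
    (Nat.fib (n + 1) : ℝ) ≤ (GenContFract.of α).dens n :=
  succ_nth_fib_le_of_nth_den (Or.inr (hα.not_terminatedAt_of _))

theorem one_le_dens (hα : Irrational α) (n : ℕ) : 1 ≤ (GenContFract.of α).dens n :=
  (Nat.one_le_cast.2 (Nat.fib_pos.2 n.succ_pos)).trans (hα.fib_succ_le_dens n)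

theorem exists_lt_dens (hα : Irrational α) (t : ℝ) : ∃ n, t < (GenContFract.of α).dens n := by
  obtain ⟨n, hn⟩ := exists_nat_gt t
  refine ⟨n, hn.trans_le ((Nat.cast_le.2 ?_).trans (hα.fib_succ_le_dens n))⟩
  have := Nat.le_fib_add_one (n + 1)
  omega

theorem exists_dens_le_lt (hα : Irrational α) {t : ℝ} (ht : 1 ≤ t) :
    ∃ n, (GenContFract.of α).dens n ≤ t ∧ t < (GenContFract.of α).dens (n + 1) := by
  classical
  have hex : ∃ n, t < (GenContFract.of α).dens (n + 1) :=
    let ⟨n, hn⟩ := hα.exists_lt_dens t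
    ⟨n, hn.trans_le of_den_mono⟩
  refine ⟨Nat.find hex, ?_, Nat.find_spec hex⟩
  rcases h : Nat.find hex with _ | k
  · rwa [zeroth_den_eq_one]
  · exact not_lt.1 (Nat.find_min hex (h ▸ k.lt_succ_self))

theorem abs_dens_mul_sub_nums_le (hα : Irrational α) (n : ℕ) :
    |(GenContFract.of α).dens n * α - (GenContFract.of α).nums n|
      ≤ 1 / (GenContFract.of α).dens (n + 1) := by
  set q := (GenContFract.of α).dens n
  have hq : 0 < q := one_pos.trans_le (hα.one_le_dens n)
  have : q * α - (GenContFract.of α).nums n = q * (α - (GenContFract.of α).convs n) := by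
    rw [conv_eq_num_div_den, mul_sub, mul_div_cancel₀ _ hq.ne']
  rw [this, abs_mul, abs_of_pos hq]
  calc q * |α - (GenContFract.of α).convs n|
      ≤ q * (1 / (q * (GenContFract.of α).dens (n + 1))) :=
        mul_le_mul_of_nonneg_left (abs_sub_convs_le (hα.not_terminatedAt_of n)) hq.le
    _ = 1 / (GenContFract.of α).dens (n + 1) := by field_simp

theorem nums_mul_dens_succ_sub_dens_mul_nums_succ (hα : Irrational α) (n : ℕ) :
    (GenContFract.of α).nums n * (GenContFract.of α).dens (n + 1)
      - (GenContFract.of α).dens n * (GenContFract.of α).nums (n + 1) = (-1) ^ (n + 1) :=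
  SimpContFract.determinant (s := SimpContFract.of α) (hα.not_terminatedAt_of n)

theorem dens_succ_le_of_partDens_le (hα : Irrational α) {B : ℝ}
    (hB : ∀ n : ℕ, ∀ b ∈ (GenContFract.of α).partDens.get? n, b ≤ B) (n : ℕ) :
    (GenContFract.of α).dens (n + 1) ≤ (B + 1) * (GenContFract.of α).dens n := by
  obtain ⟨gp, hgp⟩ := Option.ne_none_iff_exists'.1 (hα.not_terminatedAt_of n)
  have hb := hB n gp.b (partDen_eq_s_b hgp)
  cases n with
  | zero => rw [first_den_eq hgp, zeroth_den_eq_one]; linarith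
  | succ n =>
    rw [dens_recurrence hgp rfl rfl, of_partNum_eq_one (partNum_eq_s_a hgp)]
    nlinarith [of_den_mono (v := α) (n := n), zero_le_of_den (v := α) (n := n + 1)]

theorem one_le_of_dens_succ_le (hα : Irrational α) {K : ℝ}
    (hK : ∀ n, (GenContFract.of α).dens (n + 1) ≤ K * (GenContFract.of α).dens n) : 1 ≤ K := by
  simpa [zeroth_den_eq_one] using (hα.one_le_dens 1).trans (hK 0)

theorem one_div_two_mul_dens_le_abs_mul_sub (hα : Irrational α) {d p : ℤ} {N : ℕ}
    (hN : 2 * |(d : ℝ)| ≤ (GenContFract.of α).dens (N + 1))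
    (h : d * (GenContFract.of α).nums N ≠ (GenContFract.of α).dens N * p) :
    1 / (2 * (GenContFract.of α).dens N) ≤ |d * α - p| := by
  obtain ⟨P, hP⟩ := exists_intCast_eq_of_nums α N
  obtain ⟨Q, hQ⟩ := exists_intCast_eq_of_dens α N
  have hQpos : 0 < (GenContFract.of α).dens N := one_pos.trans_le (hα.one_le_dens N)
  have hsep := one_le_abs_mul_add_abs_mul_of_ne α (d := d) (p := p) (Q := Q) (P := P)
    (by rw [← hP, ← hQ] at h; exact_mod_cast h)
  rw [hP, hQ, abs_of_pos hQpos] at hsep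
  have hN' : |(d : ℝ)| * |(GenContFract.of α).dens N * α - (GenContFract.of α).nums N| ≤ 1 / 2 :=
    calc _ ≤ |(d : ℝ)| * (1 / (GenContFract.of α).dens (N + 1)) :=
          mul_le_mul_of_nonneg_left (hα.abs_dens_mul_sub_nums_le N) (abs_nonneg _)
      _ ≤ 1 / 2 := by
        rw [mul_one_div, div_le_iff₀ (one_pos.trans_le (hα.one_le_dens _))]; linarith
  rw [div_le_iff₀ (by positivity)]
  linarith

theorem one_div_le_abs_mul_sub_of_dens_succ_le (hα : Irrational α) {K : ℝ}
    (hK : ∀ n, (GenContFract.of α).dens (n + 1) ≤ K * (GenContFract.of α).dens n)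
    {d : ℤ} (hd : d ≠ 0) (p : ℤ) : 1 / (4 * K * |(d : ℝ)|) ≤ |d * α - p| := by
  have hd1 : (1 : ℝ) ≤ |(d : ℝ)| := by rw [← Int.cast_abs]; exact_mod_cast Int.one_le_abs hd
  have hK1 := hα.one_le_of_dens_succ_le hK
  obtain ⟨n, hn, hn1⟩ := hα.exists_dens_le_lt (t := 2 * |(d : ℝ)|) (by linarith)
  have hbound : 1 / (4 * K * |(d : ℝ)|) ≤ 1 / (2 * (GenContFract.of α).dens (n + 1)) := by
    refine one_div_le_one_div_of_le (by linarith [hα.one_le_dens (n + 1)]) ?_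
    nlinarith [hK n]
  have hdet := hα.nums_mul_dens_succ_sub_dens_mul_nums_succ n
  -- `p/d` cannot equal both of two consecutive convergents, which are distinct
  have hne : (d : ℝ) * (GenContFract.of α).nums n ≠ (GenContFract.of α).dens n * p ∨
      (d : ℝ) * (GenContFract.of α).nums (n + 1) ≠ (GenContFract.of α).dens (n + 1) * p := by
    by_contra! h
    have : (d : ℝ) * (-1) ^ (n + 1) = 0 := by
      rw [← hdet]
      linear_combination (GenContFract.of α).dens (n + 1) * h.1 - (GenContFract.of α).dens n * h.2
    simp [hd] at this
  rcases hne with h | h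
  · calc _ ≤ 1 / (2 * (GenContFract.of α).dens (n + 1)) := hbound
      _ ≤ 1 / (2 * (GenContFract.of α).dens n) := by
        refine one_div_le_one_div_of_le (by linarith [hα.one_le_dens n]) ?_
        linarith [of_den_mono (v := α) (n := n)]
      _ ≤ _ := hα.one_div_two_mul_dens_le_abs_mul_sub hn1.le h
  · exact hbound.trans (hα.one_div_two_mul_dens_le_abs_mul_sub (hn1.le.trans of_den_mono) h)

theorem one_div_le_distNearestInt_sub_mul_of_dens_succ_le (hα : Irrational α) {K : ℝ}
    (hK : ∀ n, (GenContFract.of α).dens (n + 1) ≤ K * (GenContFract.of α).dens n)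
    {m j j' : ℕ} (hj : j < m) (hj' : j' < m) (hne : j ≠ j') :
    1 / (4 * K * m) ≤ distNearestInt (((j : ℝ) - j') * α) := by
  have hK1 := hα.one_le_of_dens_succ_le hK
  have hd : (j : ℤ) - j' ≠ 0 := sub_ne_zero.2 (Nat.cast_injective.ne hne)
  have hdm : |(((j : ℤ) - j' : ℤ) : ℝ)| ≤ m := by
    have : |(j : ℤ) - j'| ≤ m := abs_le.2 ⟨by omega, by omega⟩
    rw [← Int.cast_abs]; exact_mod_cast this
  calc 1 / (4 * K * m) ≤ 1 / (4 * K * |(((j : ℤ) - j' : ℤ) : ℝ)|) := by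
        gcongr
    _ ≤ _ := hα.one_div_le_abs_mul_sub_of_dens_succ_le hK hd (round _)
    _ = distNearestInt (((j : ℝ) - j') * α) := by push_cast; rfl

theorem exists_distNearestInt_add_le_of_dens_succ_le (hα : Irrational α) {K : ℝ}
    (hK : ∀ n, (GenContFract.of α).dens (n + 1) ≤ K * (GenContFract.of α).dens n)
    {m : ℕ} (hm : 1 ≤ m) (x : ℝ) :
    ∃ j < m, distNearestInt (x + j * α) ≤ 2 * (K + 1) / m := by
  have hK1 := hα.one_le_of_dens_succ_le hK
  have hmpos : (0 : ℝ) < m := by exact_mod_cast hm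
  by_cases hsmall : (m : ℝ) < K + 1
  · refine ⟨0, hm, (abs_sub_round _).trans ?_⟩
    rw [le_div_iff₀ hmpos]
    linarith
  replace hsmall := not_lt.1 hsmall
  obtain ⟨n, hn, hn1⟩ := hα.exists_dens_le_lt (t := m / (K + 1))
    (by rw [le_div_iff₀ (by linarith)]; linarith)
  rw [le_div_iff₀ (by linarith)] at hn
  rw [div_lt_iff₀ (by linarith)] at hn1
  obtain ⟨P₀, hP₀⟩ := exists_intCast_eq_of_nums α n
  obtain ⟨Q₀, hQ₀⟩ := exists_intCast_eq_of_dens α n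
  obtain ⟨P₁, hP₁⟩ := exists_intCast_eq_of_nums α (n + 1)
  obtain ⟨Q₁, hQ₁⟩ := exists_intCast_eq_of_dens α (n + 1)
  have hdet : Q₀ * P₁ ≠ Q₁ * P₀ := by
    intro h
    have h' : (Q₀ : ℝ) * P₁ = Q₁ * P₀ := by exact_mod_cast h
    have hdet := hα.nums_mul_dens_succ_sub_dens_mul_nums_succ n
    rw [← hP₀, ← hQ₀, ← hP₁, ← hQ₁] at hdet
    exact pow_ne_zero _ (neg_ne_zero.2 one_ne_zero) (by rw [← hdet]; linear_combination -h')
  have hQ₀pos : 0 < Q₀ := by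
    have : (0 : ℝ) < Q₀ := hQ₀ ▸ one_pos.trans_le (hα.one_le_dens n)
    exact_mod_cast this
  have hQ₁pos : 0 ≤ Q₁ := by
    have : (0 : ℝ) ≤ Q₁ := hQ₁ ▸ zero_le_of_den
    exact_mod_cast this
  obtain ⟨j, hj, hdist⟩ := exists_distNearestInt_add_mul_le α x hQ₀pos hQ₁pos hdet
  rw [hP₀, hQ₀, hP₁, hQ₁] at hdist
  refine ⟨j, ?_, ?_⟩
  · have hj' : (j : ℝ) < Q₀ + Q₁ := by exact_mod_cast hj
    rw [hQ₀, hQ₁] at hj'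
    have := hK n
    exact_mod_cast (show (j : ℝ) < m by linarith)
  · have hpos := one_pos.trans_le (hα.one_le_dens (n + 1))
    calc _ ≤ 1 / (GenContFract.of α).dens (n + 1) + 1 / (GenContFract.of α).dens (n + 2) :=
          hdist.trans (add_le_add (hα.abs_dens_mul_sub_nums_le n)
            (hα.abs_dens_mul_sub_nums_le (n + 1)))
      _ ≤ 2 / (GenContFract.of α).dens (n + 1) := by
        have : 1 / (GenContFract.of α).dens (n + 2) ≤ 1 / (GenContFract.of α).dens (n + 1) :=
          one_div_le_one_div_of_le hpos of_den_mono
        linarith [add_div 1 1 ((GenContFract.of α).dens (n + 1))]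
      _ ≤ 2 * (K + 1) / m := by
        rw [div_le_div_iff₀ hpos hmpos]
        linarith

end Irrational

/-- Let α be irrational with bounded partial quotients.  Then there are
constants C₁, C₂ > 0 such that for each m ≥ 1 the lengths of the intervals of
the partition of the circle determined by 0, −α, …, −(m−1)α are between C₁/m
and C₂/m; equivalently, the points are pairwise C₁/m-separated and every point
of the circle is within C₂/m of one of them. -/
theorem stmt3 (α : ℝ) (hα : Irrational α)
    (hbounded : ∃ B : ℝ, ∀ n : ℕ, ∀ b ∈ (GenContFract.of α).partDens.get? n, b ≤ B) :
    ∃ C₁ C₂ : ℝ, 0 < C₁ ∧ 0 < C₂ ∧ ∀ m : ℕ, 1 ≤ m →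
      (∀ j j' : ℕ, j < m → j' < m → j ≠ j' →
        C₁ / m ≤ distNearestInt (((j : ℝ) - (j' : ℝ)) * α)) ∧
      (∀ x : ℝ, ∃ j : ℕ, j < m ∧ distNearestInt (x + (j : ℝ) * α) ≤ C₂ / m) := by
  obtain ⟨B, hB⟩ := hbounded
  have hK := hα.dens_succ_le_of_partDens_le hB
  have hK1 := hα.one_le_of_dens_succ_le hK
  refine ⟨1 / (4 * (B + 1)), 2 * (B + 1 + 1), by positivity, by positivity, fun m hm ↦
    ⟨fun j j' hj hj' hne ↦ ?_, hα.exists_distNearestInt_add_le_of_dens_succ_le hK hm⟩⟩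
  rw [div_div]
  exact hα.one_div_le_distNearestInt_sub_mul_of_dens_succ_le hK hj hj' hne
end

section
/- Let α be irrational with bounded partial quotients and let β ∈ ℚ + ℚα. Then there exists c₁ > 0 such that for each m ∈ ℕ, any two distinct points among 0, −α, …, −(m−1)α, β, β−α, …, β−(m−1)α are at distance (on the circle) at least c₁/m. -/
/-!
Write `β = (A + Bα)/Q`. A difference of two of the points is `eβ + kα` with `|e| ≤ 1` and
`|k| < m`, and on the circle `Q • (eβ + kα) = (eB + Qk) • α`. If `eB + Qk = 0`, the point is a
nonzero `Q`-torsion point of the circle, hence at distance at least `1/Q` from `0`. Otherwise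
`|eB + Qk| ≤ (|B| + Q) m`, so the bounded partial quotients give
`‖(eB + Qk)α‖ ≥ C₁ / ((|B| + Q) m)`, and passing from `Q • u` back to `u` costs a factor `Q`.
-/

def IsBadlyApproximable {E : Type*} [SeminormedAddCommGroup E] (C : ℝ) (a : E) : Prop :=
  ∀ n : ℤ, n ≠ 0 → C / |(n : ℝ)| ≤ ‖n • a‖

lemma IsBadlyApproximable.div_le_norm_of_nsmul_eq_zsmul {E : Type*} [SeminormedAddCommGroup E]
    {C : ℝ} {a u : E} (ha : IsBadlyApproximable C a) {Q : ℕ} (hQ : 0 < Q) {N : ℤ}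
    (hN : N ≠ 0) (h : Q • u = N • a) : C / (Q * |(N : ℝ)|) ≤ ‖u‖ := by
  have hQ' : (0 : ℝ) < Q := by exact_mod_cast hQ
  calc C / (Q * |(N : ℝ)|) = C / |(N : ℝ)| / Q := by rw [mul_comm, div_div]
    _ ≤ ‖Q • u‖ / Q := by rw [h]; gcongr; exact ha N hN
    _ ≤ ‖u‖ := by rw [div_le_iff₀ hQ', mul_comm]; exact norm_nsmul_le

namespace AddCircle

variable {p : ℝ} [Fact (0 < p)]

lemma div_le_norm_of_nsmul_eq_zero {u : AddCircle p} {n : ℕ} (hn : 0 < n) (hnu : n • u = 0)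
    (hu : u ≠ 0) : p / n ≤ ‖u‖ := by
  have hfin : IsOfFinAddOrder u := isOfFinAddOrder_iff_nsmul_eq_zero.mpr ⟨n, hn, hnu⟩
  have hn' : (0 : ℝ) < n := by exact_mod_cast hn
  rw [div_le_iff₀ hn', mul_comm]
  calc p ≤ addOrderOf u • ‖u‖ := le_add_order_smul_norm_of_isOfFinAddOrder hfin hu
    _ ≤ n * ‖u‖ := by
      rw [nsmul_eq_mul]
      gcongr
      exact_mod_cast addOrderOf_le_of_nsmul_eq_zero hn hnu

theorem exists_pos_div_le_norm_zsmul_add_zsmul {C : ℝ} {a g : AddCircle p} (hC : 0 < C)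
    (ha : IsBadlyApproximable C a) {Q : ℕ} (hQ : 0 < Q) {B : ℤ} (hg : Q • g = B • a) :
    ∃ c > 0, ∀ (m : ℕ) (e k : ℤ), |e| ≤ 1 → |k| < m → e • g + k • a ≠ 0 →
      c / m ≤ ‖e • g + k • a‖ := by
  have hp : 0 < p := Fact.out
  have hQ' : (0 : ℝ) < Q := by exact_mod_cast hQ
  refine ⟨min (p / Q) (C / (Q * (|(B : ℝ)| + Q))), by positivity, ?_⟩
  intro m e k he hk hu
  have hm : 1 ≤ (m : ℤ) := by have := abs_nonneg k; omega
  have hQu : Q • (e • g + k • a) = (e * B + Q * k) • a := by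
    rw [smul_add, smul_comm, hg, ← mul_zsmul, ← natCast_zsmul, ← mul_zsmul, add_zsmul]
  rcases eq_or_ne (e * B + Q * k) 0 with hN | hN
  · rw [hN, zero_zsmul] at hQu
    calc _ ≤ min (p / Q) (C / (Q * (|(B : ℝ)| + Q))) :=
          div_le_self (by positivity) (by exact_mod_cast hm)
      _ ≤ p / Q := min_le_left _ _
      _ ≤ _ := div_le_norm_of_nsmul_eq_zero hQ hQu hu
  · have hNm : |((e * B + Q * k : ℤ) : ℝ)| ≤ (|(B : ℝ)| + Q) * m := by
      have : |e * B + Q * k| ≤ (|B| + Q) * m := by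
        calc |e * B + Q * k| ≤ |e * B| + |Q * k| := abs_add_le _ _
          _ = |e| * |B| + Q * |k| := by rw [abs_mul, abs_mul, Nat.abs_cast]
          _ ≤ 1 * |B| + Q * m := by gcongr
          _ ≤ (|B| + Q) * m := by nlinarith [abs_nonneg B]
      exact_mod_cast this
    calc _ ≤ C / (Q * (|(B : ℝ)| + Q)) / m := by gcongr; exact min_le_right _ _
      _ = C / (Q * ((|(B : ℝ)| + Q) * m)) := by rw [div_div, mul_assoc]
      _ ≤ C / (Q * |((e * B + Q * k : ℤ) : ℝ)|) := by gcongr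
      _ ≤ _ := ha.div_le_norm_of_nsmul_eq_zsmul hQ hN hQu

end AddCircle

lemma distNearestInt_eq_norm (x : ℝ) : distNearestInt x = ‖(x : UnitAddCircle)‖ :=
  UnitAddCircle.norm_eq.symm

lemma UnitAddCircle.exists_nsmul_coe_eq_zsmul (r s : ℚ) (α : ℝ) :
    ∃ Q : ℕ, 0 < Q ∧
      ∃ B : ℤ, Q • ((r + s * α : ℝ) : UnitAddCircle) = B • (α : UnitAddCircle) := by
  refine ⟨r.den * s.den, by positivity, s.num * r.den, ?_⟩
  have : ((r.den * s.den : ℕ) : ℝ) * (r + s * α) =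
      (r.num * s.den : ℤ) + (s.num * r.den : ℤ) * α := by
    rw [Rat.cast_def r, Rat.cast_def s]
    push_cast
    field_simp
  have hcoe_int (n : ℤ) : ((n : ℝ) : UnitAddCircle) = 0 := by simp
  rw [← AddCircle.coe_nsmul, ← AddCircle.coe_zsmul, nsmul_eq_mul, zsmul_eq_mul, this,
    AddCircle.coe_add, hcoe_int, zero_add]

theorem stmt4_general (α : ℝ)
    (C₁ : ℝ) (hC₁ : 0 < C₁)
    (hbpq : ∀ j : ℤ, j ≠ 0 → C₁ / |(j : ℝ)| ≤ distNearestInt ((j : ℝ) * α))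
    (β : ℝ) (hβ : ∃ r s : ℚ, β = (r : ℝ) + (s : ℝ) * α) :
    ∃ c₁ : ℝ, 0 < c₁ ∧ ∀ m : ℕ, 1 ≤ m →
      ∀ (b b' : Bool) (j j' : ℕ), j < m → j' < m →
        distNearestInt (((if b then β else 0) - (j : ℝ) * α) -
          ((if b' then β else 0) - (j' : ℝ) * α)) ≠ 0 →
        c₁ / m ≤ distNearestInt (((if b then β else 0) - (j : ℝ) * α) -
          ((if b' then β else 0) - (j' : ℝ) * α)) := by
  obtain ⟨r, s, rfl⟩ := hβ
  have ha : IsBadlyApproximable C₁ (α : UnitAddCircle) := fun n hn => by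
    rw [← AddCircle.coe_zsmul, zsmul_eq_mul, ← distNearestInt_eq_norm]
    exact hbpq n hn
  obtain ⟨Q, hQ, B, hg⟩ := UnitAddCircle.exists_nsmul_coe_eq_zsmul r s α
  obtain ⟨c, hc, hbound⟩ := AddCircle.exists_pos_div_le_norm_zsmul_add_zsmul hC₁ ha hQ hg
  refine ⟨c, hc, fun m _ b b' j j' hj hj' hne => ?_⟩
  have hdiff : ((if b then (r + s * α : ℝ) else 0) - j * α) -
      ((if b' then (r + s * α : ℝ) else 0) - j' * α) =
      ((b.toNat - b'.toNat : ℤ) • (r + s * α : ℝ)) + (j' - j : ℤ) • α := by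
    cases b <;> cases b' <;>
      simp only [Bool.toNat_true, Bool.toNat_false, if_true, if_false, Bool.false_eq_true,
        zsmul_eq_mul] <;>
      push_cast <;> ring
  rw [hdiff, distNearestInt_eq_norm, AddCircle.coe_add, AddCircle.coe_zsmul,
    AddCircle.coe_zsmul] at hne ⊢
  exact hbound m (b.toNat - b'.toNat) (j' - j) (by cases b <;> cases b' <;> simp)
    (by rw [abs_lt]; omega) (norm_ne_zero_iff.mp hne)

/-- Let α be irrational with bounded partial quotients (so that ‖jα‖ ≥ C₁/|j|
for j ≠ 0), and let β ∈ ℚ + ℚα.  Then there exists c₁ > 0 such that for each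
m ≥ 1 any two points among 0, −α, …, −(m−1)α, β, β−α, …, β−(m−1)α which are
distinct on the circle are at circle distance at least c₁/m. -/
theorem stmt4 (α : ℝ) (hα : Irrational α)
    (C₁ : ℝ) (hC₁ : 0 < C₁)
    (hbpq : ∀ j : ℤ, j ≠ 0 → C₁ / |(j : ℝ)| ≤ distNearestInt ((j : ℝ) * α))
    (β : ℝ) (hβ : ∃ r s : ℚ, β = (r : ℝ) + (s : ℝ) * α) :
    ∃ c₁ : ℝ, 0 < c₁ ∧ ∀ m : ℕ, 1 ≤ m →
      ∀ (b b' : Bool) (j j' : ℕ), j < m → j' < m →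
        distNearestInt (((if b then β else 0) - (j : ℝ) * α) -
          ((if b' then β else 0) - (j' : ℝ) * α)) ≠ 0 →
        c₁ / m ≤ distNearestInt (((if b then β else 0) - (j : ℝ) * α) -
          ((if b' then β else 0) - (j' : ℝ) * α)) :=
  stmt4_general α C₁ hC₁ hbpq β hβ
end

section
/- Let β = (p₁ + p₂α)/q with p₁, p₂ ∈ ℤ, q ∈ ℕ, q ≥ 1, and let α be irrational with ‖jα‖ ≥ C₁/|j| for all nonzero integers j. If 0 ≤ r, s < m and β − sα + rα ∉ ℤ, then ‖β + (r−s)α‖ ≥ min(C₁/(q(q+|p₂|)m), 1/(qm)). -/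
namespace distNearestInt

lemma le_abs_sub_intCast (x : ℝ) (n : ℤ) : distNearestInt x ≤ |x - n| := round_le x n

lemma intCast_add (n : ℤ) (x : ℝ) : distNearestInt (n + x) = distNearestInt x := by
  unfold distNearestInt
  rw [round_intCast_add, Int.cast_add]
  ring_nf

lemma natCast_mul_le (q : ℕ) (x : ℝ) : distNearestInt (q * x) ≤ q * distNearestInt x :=
  calc distNearestInt (q * x) ≤ |q * x - ((q * round x : ℤ) : ℝ)| := le_abs_sub_intCast _ _
    _ = q * distNearestInt x := by
      rw [distNearestInt, Int.cast_mul, Int.cast_natCast, ← mul_sub, abs_mul, Nat.abs_cast]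

lemma div_le_of_le_natCast_mul {q : ℕ} (hq : 0 < q) {C x : ℝ} (h : C ≤ distNearestInt (q * x)) :
    C / q ≤ distNearestInt x := by
  rw [div_le_iff₀' (by exact_mod_cast hq)]
  exact h.trans (natCast_mul_le q x)

lemma one_div_le_of_natCast_mul_eq_intCast {q : ℕ} (hq : 0 < q) {x : ℝ} {p : ℤ}
    (hqx : q * x = p) (hx : ¬ ∃ k : ℤ, x = k) : 1 / q ≤ distNearestInt x := by
  have hq' : (0 : ℝ) < q := by exact_mod_cast hq
  have hne : p - q * round x ≠ 0 := by
    intro h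
    refine hx ⟨round x, mul_left_cancel₀ hq'.ne' ?_⟩
    rw [hqx]
    exact_mod_cast sub_eq_zero.mp h
  have hone : (1 : ℝ) ≤ |((p - q * round x : ℤ) : ℝ)| := by
    exact_mod_cast Int.one_le_abs hne
  rw [div_le_iff₀' hq', distNearestInt, ← Nat.abs_cast, ← abs_mul, mul_sub, hqx]
  push_cast at hone
  exact hone

end distNearestInt

lemma abs_add_mul_sub_le {a : ℤ} {q m r s : ℕ} (hr : r < m) (hs : s < m) :
    |a + q * ((r : ℤ) - s)| ≤ (q + |a|) * m := by
  have hrs : |(r : ℤ) - s| ≤ m := by rw [abs_sub_le_iff]; omega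
  calc |a + q * ((r : ℤ) - s)| ≤ |a| + q * |(r : ℤ) - s| := by
        simpa [abs_mul] using abs_add_le a (q * ((r : ℤ) - s))
    _ ≤ |a| * m + q * m := by
        gcongr
        exact le_mul_of_one_le_right (abs_nonneg a) (by omega)
    _ = (q + |a|) * m := by ring

theorem stmt5_general (α : ℝ)
    (C₁ : ℝ) (hC₁ : 0 < C₁)
    (hbpq : ∀ j : ℤ, j ≠ 0 → C₁ / |(j : ℝ)| ≤ distNearestInt ((j : ℝ) * α))
    (p₁ p₂ : ℤ) (q : ℕ) (hq : 1 ≤ q) (β : ℝ)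
    (hβ : β = ((p₁ : ℝ) + (p₂ : ℝ) * α) / q)
    (m r s : ℕ) (hr : r < m) (hs : s < m)
    (hnotint : ¬ ∃ k : ℤ, β - (s : ℝ) * α + (r : ℝ) * α = (k : ℝ)) :
    min (C₁ / ((q : ℝ) * ((q : ℝ) + |(p₂ : ℝ)|) * m)) (1 / ((q : ℝ) * m)) ≤
      distNearestInt (β + ((r : ℝ) - (s : ℝ)) * α) := by
  set x := β + ((r : ℝ) - s) * α
  set j : ℤ := p₂ + q * ((r : ℤ) - s) with hj
  have hq' : (0 : ℝ) < q := by exact_mod_cast hq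
  have hm : (1 : ℝ) ≤ m := by exact_mod_cast (show 1 ≤ m by omega)
  have hqx : q * x = p₁ + j * α := by
    simp only [x, hβ, hj]
    push_cast
    field_simp
    ring
  rcases eq_or_ne j 0 with hj0 | hj0
  · have hx : ¬ ∃ k : ℤ, x = k := fun ⟨k, hk⟩ => hnotint ⟨k, by rw [← hk]; ring⟩
    have hqx0 : q * x = p₁ := by rw [hqx, hj0, Int.cast_zero, zero_mul, add_zero]
    have hdist := distNearestInt.one_div_le_of_natCast_mul_eq_intCast hq hqx0 hx
    refine (min_le_right _ _).trans (le_trans ?_ hdist)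
    gcongr
    exact le_mul_of_one_le_right hq'.le hm
  · have hdist : C₁ / |(j : ℝ)| ≤ distNearestInt (q * x) := by
      rw [hqx, distNearestInt.intCast_add]
      exact hbpq j hj0
    have hjm : |j| ≤ (q + |p₂|) * m := abs_add_mul_sub_le hr hs
    have hjm' : |(j : ℝ)| ≤ (q + |(p₂ : ℝ)|) * m := by exact_mod_cast hjm
    refine (min_le_left _ _).trans (le_trans ?_ (distNearestInt.div_le_of_le_natCast_mul hq hdist))
    rw [div_div, mul_comm |(j : ℝ)|, mul_assoc]
    gcongr

/-- Let β = (p₁ + p₂α)/q with p₁, p₂ ∈ ℤ, q ≥ 1, and let α be irrational with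
‖jα‖ ≥ C₁/|j| for all nonzero integers j.  If 0 ≤ r, s < m and β − sα + rα ∉ ℤ,
then ‖β + (r−s)α‖ ≥ min(C₁/(q(q+|p₂|)m), 1/(qm)). -/
theorem stmt5 (α : ℝ) (hα : Irrational α)
    (C₁ : ℝ) (hC₁ : 0 < C₁)
    (hbpq : ∀ j : ℤ, j ≠ 0 → C₁ / |(j : ℝ)| ≤ distNearestInt ((j : ℝ) * α))
    (p₁ p₂ : ℤ) (q : ℕ) (hq : 1 ≤ q) (β : ℝ)
    (hβ : β = ((p₁ : ℝ) + (p₂ : ℝ) * α) / q)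
    (m r s : ℕ) (hr : r < m) (hs : s < m)
    (hnotint : ¬ ∃ k : ℤ, β - (s : ℝ) * α + (r : ℝ) * α = (k : ℝ)) :
    min (C₁ / ((q : ℝ) * ((q : ℝ) + |(p₂ : ℝ)|) * m)) (1 / ((q : ℝ) * m)) ≤
      distNearestInt (β + ((r : ℝ) - (s : ℝ)) * α) :=
  stmt5_general α C₁ hC₁ hbpq p₁ p₂ q hq β hβ m r s hr hs hnotint
end

section
/- Let f : 𝕋 → ℝ be a piecewise constant, right-continuous function with discontinuity points ξ₁, …, ξ_p and jumps d₁, …, d_p satisfying Σᵢ dᵢ = 0. Suppose that whenever a nontrivial integer combination Σᵢ nᵢdᵢ = 0 there exist i < i′ with nᵢ, n_{i′} ≠ 0 and ξᵢ − ξ_{i′} ∉ ℤ + ℤα. Then for every m ∈ ℕ, the set of discontinuity points of the Birkhoff sum f^{(m)}(x) = Σ_{j=0}^{m−1} f(x + jα) is exactly {ξᵢ − jα mod 1 : 1 ≤ i ≤ p, 0 ≤ j < m}. -/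
open Filter Topology

/-!
Away from the translates of the `ξ i`, `f` is continuous; at `ξ i + k` its left limit exceeds its
value by `d i`, and since the `ξ i` are distinct mod 1 each point `y` carries the jump of at most one
`ξ i`. Hence the Birkhoff sum `f⁽ᵐ⁾` has at `x` the left limit `f⁽ᵐ⁾ x + ∑ i, nᵢ dᵢ`, where `nᵢ ∈ {0, 1}`
records whether some `x + jα` (`j < m`) is congruent to `ξ i` mod 1; by irrationality of `α` at most
one `j` does. If `x` is a candidate point, some `nᵢ = 1`. Were `f⁽ᵐ⁾` continuous at `x`, (P1) would
produce two hit indices `i, i'` with `ξ i - ξ i' ∉ ℤ + ℤα`, whereas `x + jα ≡ ξ i` and `x + j'α ≡ ξ i'`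
give `ξ i - ξ i' ≡ (j - j')α`.
-/

lemma tendsto_add_const_nhdsLT (c x : ℝ) :
    Tendsto (fun y => y + c) (𝓝[<] x) (𝓝[<] (x + c)) :=
  (continuous_add_const c).continuousWithinAt.tendsto_nhdsWithin fun _ hy => by
    simpa using hy

lemma eq_of_add_intCast_eq_add_intCast {R : Type*} [Ring R] [LinearOrder R]
    [IsStrictOrderedRing R] [FloorRing R] {a b : R} (ha : a ∈ Set.Ico 0 1)
    (hb : b ∈ Set.Ico 0 1) {k l : ℤ} (h : a + k = b + l) : a = b := by
  rw [← Int.fract_eq_self.2 ha, ← Int.fract_eq_self.2 hb, ← Int.fract_add_intCast a k, h,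
    Int.fract_add_intCast]

lemma Irrational.eq_of_natCast_mul_add_intCast_eq {α : ℝ} (hα : Irrational α) {j j' : ℕ}
    {k k' : ℤ} (h : j * α + k = j' * α + k') : j = j' := by
  by_contra hne
  have hsub : ((j - j' : ℤ) : ℝ) * α = (k' - k : ℤ) := by
    push_cast
    linarith
  exact (hα.intCast_mul (sub_ne_zero.2 (by exact_mod_cast hne))).ne_int _ hsub

lemma Finset.sum_ite_const_of_subsingleton {β M : Type*} [AddCommMonoid M] {s : Finset β}
    {P : β → Prop} [DecidablePred P] (c : M)
    (hP : ∀ j ∈ s, ∀ j' ∈ s, P j → P j' → j = j') :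
    ∑ j ∈ s, (if P j then c else 0) = if ∃ j ∈ s, P j then c else 0 := by
  split_ifs with h
  · obtain ⟨j, hj, hPj⟩ := h
    rw [Finset.sum_eq_single_of_mem j hj (fun j' hj' hne => if_neg fun hPj' =>
      hne (hP _ hj' _ hj hPj' hPj)), if_pos hPj]
  · exact Finset.sum_eq_zero fun j hj => if_neg fun hPj => h ⟨j, hj, hPj⟩

lemma sum_eq_zero_of_continuousAt_sum {β : Type*} {s : Finset β} {g : β → ℝ → ℝ} {c : β → ℝ}
    {x : ℝ} (hg : ∀ j ∈ s, Tendsto (g j) (𝓝[<] x) (𝓝 (g j x + c j)))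
    (hs : ContinuousAt (fun y => ∑ j ∈ s, g j y) x) : ∑ j ∈ s, c j = 0 := by
  have hlim := tendsto_nhds_unique (tendsto_finsetSum s hg)
    (hs.tendsto.mono_left nhdsWithin_le_nhds)
  rw [Finset.sum_add_distrib] at hlim
  linarith

section Jumps

variable {ι : Type*} [Fintype ι] {ξ d : ι → ℝ}

open Classical in
variable (ξ d) in
noncomputable def jumpAt (y : ℝ) : ℝ :=
  ∑ i, if ∃ k : ℤ, y = ξ i + k then d i else 0

lemma jumpAt_of_forall_ne {y : ℝ} (hy : ∀ i (k : ℤ), y ≠ ξ i + k) : jumpAt ξ d y = 0 :=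
  Finset.sum_eq_zero fun i _ => if_neg fun ⟨k, hk⟩ => hy i k hk

lemma jumpAt_add_intCast (hξ : ∀ i, ξ i ∈ Set.Ico 0 1) (hinj : Function.Injective ξ)
    (i : ι) (k : ℤ) : jumpAt ξ d (ξ i + k) = d i := by
  rw [jumpAt, Finset.sum_eq_single_of_mem i (Finset.mem_univ i), if_pos ⟨k, rfl⟩]
  exact fun i' _ hne => if_neg fun ⟨k', hk'⟩ =>
    hne (hinj (eq_of_add_intCast_eq_add_intCast (hξ i') (hξ i) hk'.symm))

lemma tendsto_nhdsLT_jumpAt (hξ : ∀ i, ξ i ∈ Set.Ico 0 1) (hinj : Function.Injective ξ)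
    {f : ℝ → ℝ} (hcont : ∀ x : ℝ, (∀ i (k : ℤ), x ≠ ξ i + k) → ContinuousAt f x)
    (hjump : ∀ i (k : ℤ), Tendsto f (𝓝[<] (ξ i + k)) (𝓝 (f (ξ i + k) + d i))) (y : ℝ) :
    Tendsto f (𝓝[<] y) (𝓝 (f y + jumpAt ξ d y)) := by
  by_cases hy : ∃ i, ∃ k : ℤ, y = ξ i + k
  · obtain ⟨i, k, rfl⟩ := hy
    rw [jumpAt_add_intCast hξ hinj]
    exact hjump i k
  · push Not at hy
    rw [jumpAt_of_forall_ne hy, add_zero]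
    exact (hcont y hy).tendsto.mono_left nhdsWithin_le_nhds

open Classical in
lemma sum_range_jumpAt_add_mul {α : ℝ} (hα : Irrational α) (m : ℕ) (x : ℝ) :
    ∑ j ∈ Finset.range m, jumpAt ξ d (x + j * α) =
      ∑ i, if ∃ j ∈ Finset.range m, ∃ k : ℤ, x + j * α = ξ i + k then d i else 0 := by
  simp only [jumpAt]
  rw [Finset.sum_comm]
  refine Finset.sum_congr rfl fun i _ => Finset.sum_ite_const_of_subsingleton _ ?_
  rintro j - j' - ⟨k, hk⟩ ⟨k', hk'⟩
  exact Nat.cast_injective (hα.eq_of_natCast_mul_add_intCast_eq (k := -k) (k' := -k')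
    (by push_cast; linarith))

end Jumps

theorem stmt6_general (α : ℝ) (hα : Irrational α)
    (p : ℕ) (ξ : Fin p → ℝ) (d : Fin p → ℝ)
    (hξ : ∀ i, ξ i ∈ Set.Ico (0 : ℝ) 1) (hinj : Function.Injective ξ)
    (f : ℝ → ℝ)
    -- f is continuous away from the translates of the ξᵢ
    (hcont : ∀ x : ℝ, (∀ (i : Fin p) (k : ℤ), x ≠ ξ i + (k : ℝ)) → ContinuousAt f x)
    -- the jump of f at ξᵢ (left limit minus right limit) equals dᵢ
    (hjump : ∀ (i : Fin p) (k : ℤ),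
      Tendsto f (𝓝[<] (ξ i + (k : ℝ))) (𝓝 (f (ξ i + (k : ℝ)) + d i)))
    -- property (P1) (restricted as appropriate)
    (hP1 : ∀ n : Fin p → ℤ, (∃ i, n i ≠ 0) → ∑ i, (n i : ℝ) * d i = 0 →
      ∃ i i' : Fin p, i < i' ∧ n i ≠ 0 ∧ n i' ≠ 0 ∧
        ¬ ∃ k k' : ℤ, ξ i - ξ i' = (k : ℝ) + (k' : ℝ) * α) :
    ∀ m : ℕ, 1 ≤ m →
      {x : ℝ | ¬ ContinuousAt (fun y => ∑ j ∈ Finset.range m, f (y + (j : ℝ) * α)) x} =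
      {x : ℝ | ∃ (i : Fin p) (j : ℕ), j < m ∧ ∃ k : ℤ, x = ξ i - (j : ℝ) * α + (k : ℝ)} := by
  classical
  intro m _
  ext x
  simp only [Set.mem_ofPred_eq]
  constructor
  · intro hdisc
    by_contra! hx
    exact hdisc <| tendsto_finsetSum _ fun j hj =>
      (hcont _ fun i k h => hx i j (Finset.mem_range.1 hj) k (by linarith)).comp
        (continuous_add_const _).continuousAt
  · rintro ⟨i₀, j₀, hj₀, k₀, hx⟩ hcontS
    set n : Fin p → ℤ := fun i =>
      if ∃ j ∈ Finset.range m, ∃ k : ℤ, x + j * α = ξ i + k then 1 else 0 with hn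
    have hit : ∀ i, n i ≠ 0 → ∃ j ∈ Finset.range m, ∃ k : ℤ, x + j * α = ξ i + k :=
      fun i hi => by_contra fun h => hi (if_neg h)
    have hn₀ : n i₀ ≠ 0 := by
      simp only [hn]
      rw [if_pos ⟨j₀, Finset.mem_range.2 hj₀, k₀, by rw [hx]; ring⟩]
      exact one_ne_zero
    have htotal : ∑ i, (n i : ℝ) * d i = 0 := by
      rw [← sum_eq_zero_of_continuousAt_sum (g := fun (j : ℕ) y => f (y + j * α)) (fun j _ =>
        (tendsto_nhdsLT_jumpAt hξ hinj hcont hjump _).comp (tendsto_add_const_nhdsLT _ x))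
        hcontS, sum_range_jumpAt_add_mul hα]
      refine Finset.sum_congr rfl fun i _ => ?_
      simp only [hn]
      split_ifs <;> simp
    obtain ⟨i, i', -, hi, hi', hnot⟩ := hP1 n ⟨i₀, hn₀⟩ htotal
    obtain ⟨j, -, k, hk⟩ := hit i hi
    obtain ⟨j', -, k', hk'⟩ := hit i' hi'
    exact hnot ⟨k' - k, j - j', by push_cast; linarith⟩

/-- Let f : 𝕋 → ℝ (a 1-periodic function on ℝ) be piecewise constant and
right-continuous, with discontinuity points ξ₁, …, ξ_p (mod 1) and nonzero
jumps d₁, …, d_p with Σ dᵢ = 0, satisfying property (P1).  Then for every m ≥ 1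
the set of discontinuity points of the Birkhoff sum
f⁽ᵐ⁾(x) = Σ_{j<m} f(x + jα) is exactly {ξᵢ − jα mod 1 : 1 ≤ i ≤ p, 0 ≤ j < m}. -/
theorem stmt6 (α : ℝ) (hα : Irrational α)
    (p : ℕ) (hp : 0 < p) (ξ : Fin p → ℝ) (d : Fin p → ℝ)
    (hξ : ∀ i, ξ i ∈ Set.Ico (0 : ℝ) 1) (hinj : Function.Injective ξ)
    (hd : ∀ i, d i ≠ 0) (hsum : ∑ i, d i = 0)
    (f : ℝ → ℝ) (hper : Function.Periodic f 1)
    -- f is continuous away from the translates of the ξᵢ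
    (hcont : ∀ x : ℝ, (∀ (i : Fin p) (k : ℤ), x ≠ ξ i + (k : ℝ)) → ContinuousAt f x)
    -- f is locally constant away from the discontinuities: if the closed-open
    -- arc (x, y] contains no translate of a ξᵢ then f x = f y
    (hconst : ∀ x y : ℝ, x ≤ y →
      (∀ (i : Fin p) (k : ℤ), ¬ (x < ξ i + (k : ℝ) ∧ ξ i + (k : ℝ) ≤ y)) → f x = f y)
    -- f is right-continuous
    (hrc : ∀ x : ℝ, ContinuousWithinAt f (Set.Ici x) x)
    -- the jump of f at ξᵢ (left limit minus right limit) equals dᵢ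
    (hjump : ∀ (i : Fin p) (k : ℤ),
      Tendsto f (𝓝[<] (ξ i + (k : ℝ))) (𝓝 (f (ξ i + (k : ℝ)) + d i)))
    -- property (P1) (restricted as appropriate)
    (hP1 : ∀ n : Fin p → ℤ, (∃ i, n i ≠ 0) → ∑ i, (n i : ℝ) * d i = 0 →
      ∃ i i' : Fin p, i < i' ∧ n i ≠ 0 ∧ n i' ≠ 0 ∧
        ¬ ∃ k k' : ℤ, ξ i - ξ i' = (k : ℝ) + (k' : ℝ) * α) :
    ∀ m : ℕ, 1 ≤ m →
      {x : ℝ | ¬ ContinuousAt (fun y => ∑ j ∈ Finset.range m, f (y + (j : ℝ) * α)) x} =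
      {x : ℝ | ∃ (i : Fin p) (j : ℕ), j < m ∧ ∃ k : ℤ, x = ξ i - (j : ℝ) * α + (k : ℝ)} :=
  stmt6_general α hα p ξ d hξ hinj f hcont hjump hP1
end

section
/- Let f : 𝕋 → ℝ be piecewise constant and right-continuous with discontinuities 0 ≤ ξ₁ < … < ξ_p < 1, jumps dᵢ = d(ξᵢ), and Σᵢ dᵢ = 0. Let a be the minimal value of f. Then ∫_𝕋 f dλ ∈ a + Σᵢ dᵢξᵢ + Σᵢ ℤdᵢ, i.e. there exist integers n₁, …, n_p with ∫ f dλ = a + Σᵢ dᵢξᵢ + Σᵢ nᵢdᵢ. -/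
/-!
On the pieces `[ξᵢ, ξᵢ₊₁)` of the period `[ξ₀, ξ₀ + 1)` the function takes values `vᵢ` with
`vᵢ = vᵢ₊₁ + dᵢ₊₁`, so `vᵢ = c - (d₀ + ⋯ + dᵢ)` for one constant `c`. Summation by parts, with
`∑ dᵢ = 0` and total length `1`, gives `∫ f = c + ∑ dᵢ ξᵢ`. Every value of `f`, in particular `a`,
is some `v_k`, whence `c = a + d₀ + ⋯ + d_k`.
-/

open Filter Topology MeasureTheory Finset

theorem integrableOn_Ico_of_eqOn_const {f : ℝ → ℝ} {a b c : ℝ}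
    (h : Set.EqOn f (fun _ => c) (Set.Ico a b)) : IntegrableOn f (Set.Ico a b) volume :=
  (integrableOn_const (by simp)).congr_fun h.symm measurableSet_Ico

theorem integral_eq_of_eqOn_Ico {f : ℝ → ℝ} {a b c : ℝ} (hab : a ≤ b)
    (h : Set.EqOn f (fun _ => c) (Set.Ico a b)) : ∫ x in a..b, f x = c * (b - a) := by
  rw [intervalIntegral.integral_of_le hab, integral_Ioc_eq_integral_Ioo,
    ← integral_Ico_eq_integral_Ioo, setIntegral_congr_fun measurableSet_Ico h, setIntegral_const,
    Real.volume_real_Ico_of_le hab, smul_eq_mul, mul_comm]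

theorem integral_eq_sum_of_eqOn_Ico {f : ℝ → ℝ} {ζ v : ℕ → ℝ} {n : ℕ}
    (hζ : ∀ i < n, ζ i ≤ ζ (i + 1))
    (hf : ∀ i < n, Set.EqOn f (fun _ => v i) (Set.Ico (ζ i) (ζ (i + 1)))) :
    ∫ x in ζ 0..ζ n, f x = ∑ i ∈ range n, v i * (ζ (i + 1) - ζ i) := by
  rw [← intervalIntegral.sum_integral_adjacent_intervals fun i hi =>
    (intervalIntegrable_iff_integrableOn_Ico_of_le (hζ i hi)).2
      (integrableOn_Ico_of_eqOn_const (hf i hi))]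
  exact sum_congr rfl fun i hi =>
    integral_eq_of_eqOn_Ico (hζ i (mem_range.1 hi)) (hf i (mem_range.1 hi))

theorem sum_range_partialSum_mul_sub {R : Type*} [CommRing R] (d ζ : ℕ → R) (n : ℕ) :
    ∑ i ∈ range n, (∑ j ∈ range (i + 1), d j) * (ζ (i + 1) - ζ i) =
      (∑ j ∈ range n, d j) * ζ n - ∑ j ∈ range n, d j * ζ j := by
  induction n with
  | zero => simp
  | succ n ih => rw [sum_range_succ, ih, sum_range_succ, sum_range_succ]; ring

theorem sum_mul_sub_eq_of_add_partialSum_eq {R : Type*} [CommRing R] {v d ζ : ℕ → R} {n : ℕ}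
    {c : R} (hv : ∀ i < n, v i + ∑ j ∈ range (i + 1), d j = c) (hd : ∑ j ∈ range n, d j = 0) :
    ∑ i ∈ range n, v i * (ζ (i + 1) - ζ i) = c * (ζ n - ζ 0) + ∑ j ∈ range n, d j * ζ j := by
  have hv' : ∀ i ∈ range n, v i * (ζ (i + 1) - ζ i) =
      c * (ζ (i + 1) - ζ i) - (∑ j ∈ range (i + 1), d j) * (ζ (i + 1) - ζ i) := fun i hi => by
    rw [← hv i (mem_range.1 hi)]; ring
  rw [sum_congr rfl hv', sum_sub_distrib, ← mul_sum, sum_range_sub, sum_range_partialSum_mul_sub,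
    hd]
  ring

theorem add_partialSum_eq_of_eq_add {M : Type*} [AddCommGroup M] {v d : ℕ → M} {n : ℕ}
    (h : ∀ i, i + 1 < n → v i = v (i + 1) + d (i + 1)) :
    ∀ i < n, v i + ∑ j ∈ range (i + 1), d j = v 0 + d 0 := by
  intro i hi
  induction i with
  | zero => simp
  | succ i ih => rw [sum_range_succ, ← ih (by omega), h i hi]; abel

theorem exists_mem_Ico_succ_of_mem_Ico {α : Type*} [LinearOrder α] {ζ : ℕ → α} {y : α} :
    ∀ {n : ℕ}, y ∈ Set.Ico (ζ 0) (ζ n) → ∃ k < n, y ∈ Set.Ico (ζ k) (ζ (k + 1))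
  | 0, hy => absurd hy.1 (not_le.2 hy.2)
  | n + 1, hy => by
    by_cases hn : ζ n ≤ y
    · exact ⟨n, n.lt_succ_self, hn, hy.2⟩
    · obtain ⟨k, hk, hky⟩ := exists_mem_Ico_succ_of_mem_Ico ⟨hy.1, not_le.1 hn⟩
      exact ⟨k, hk.trans n.lt_succ_self, hky⟩

def natExtend {α : Type*} {p : ℕ} (x : Fin p → α) (b : α) (i : ℕ) : α :=
  if h : i < p then x ⟨i, h⟩ else b

section NatExtend

variable {α : Type*} {p : ℕ} {x : Fin p → α} {b : α}

theorem natExtend_of_lt {i : ℕ} (h : i < p) : natExtend x b i = x ⟨i, h⟩ := dif_pos h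

theorem natExtend_self : natExtend x b p = b := dif_neg (lt_irrefl p)

variable [AddCommMonoid α]

theorem sum_range_natExtend : ∑ i ∈ range p, natExtend x b i = ∑ i, x i := by
  rw [← Fin.sum_univ_eq_sum_range]
  exact sum_congr rfl fun i _ => natExtend_of_lt i.isLt

theorem sum_range_succ_natExtend (k : Fin p) :
    ∑ i ∈ range (k + 1), natExtend x b i = ∑ i ∈ Iic k, x i := by
  rw [Nat.range_succ_eq_Iic, ← Fin.map_valEmbedding_Iic, sum_map]
  exact sum_congr rfl fun i _ => natExtend_of_lt i.isLt

end NatExtend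

section Circle

variable {p : ℕ} (hp : 0 < p) {ξ d : Fin p → ℝ} {f : ℝ → ℝ}

def ConstantBetweenTranslates (ξ : Fin p → ℝ) (f : ℝ → ℝ) : Prop :=
  ∀ x y : ℝ, x ≤ y → (∀ (i : Fin p) (k : ℤ), ¬ (x < ξ i + (k : ℝ) ∧ ξ i + (k : ℝ) ≤ y)) → f x = f y

/-- The pieces `[cutPoints ξ hp i, cutPoints ξ hp (i + 1))`, `i < p`, tile the period
`[ξ₀, ξ₀ + 1)`. -/
def cutPoints (ξ : Fin p → ℝ) (hp : 0 < p) : ℕ → ℝ :=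
  natExtend ξ (ξ ⟨0, hp⟩ + 1)

theorem cutPoints_of_lt {i : ℕ} (hi : i < p) : cutPoints ξ hp i = ξ ⟨i, hi⟩ :=
  natExtend_of_lt hi

theorem cutPoints_self : cutPoints ξ hp p = ξ ⟨0, hp⟩ + 1 := natExtend_self

theorem cutPoints_strictMonoOn (hmono : StrictMono ξ) (hspan : ∀ i, ξ i < ξ ⟨0, hp⟩ + 1) :
    StrictMonoOn (cutPoints ξ hp) (Set.Iic p) := by
  intro i _ j hj hij
  have hip : i < p := hij.trans_le hj
  rw [cutPoints_of_lt hp hip]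
  rcases (Set.mem_Iic.1 hj).lt_or_eq with hjp | rfl
  · rw [cutPoints_of_lt hp hjp]
    exact hmono hij
  · rw [cutPoints_self]
    exact hspan _

theorem eqOn_Ico_cutPoints (hmono : StrictMono ξ) (hspan : ∀ i, ξ i < ξ ⟨0, hp⟩ + 1)
    (hconst : ConstantBetweenTranslates ξ f) {i : ℕ} (hi : i < p) :
    Set.EqOn f (fun _ => f (cutPoints ξ hp i))
      (Set.Ico (cutPoints ξ hp i) (cutPoints ξ hp (i + 1))) := by
  have hζ := cutPoints_strictMonoOn hp hmono hspan
  have hmem : ∀ {j}, j ≤ p → j ∈ Set.Iic p := Set.mem_Iic.2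
  rintro x ⟨hix, hxi⟩
  refine (hconst _ x hix ?_).symm
  -- a translate `ξ j + k` in the piece lies in `[ξ₀, ξ₀ + 1)`, so `k = 0`; but `ξ j` is itself
  -- a cut point, and none lies strictly between two consecutive ones
  rintro j k ⟨hlt, hle⟩
  have hj : cutPoints ξ hp j = ξ j := cutPoints_of_lt hp j.isLt
  have hleft : ξ ⟨0, hp⟩ ≤ cutPoints ξ hp i := by
    rw [← cutPoints_of_lt (ξ := ξ) hp hp]
    exact hζ.monotoneOn (hmem hp.le) (hmem hi.le) (Nat.zero_le i)
  have hright : cutPoints ξ hp (i + 1) ≤ ξ ⟨0, hp⟩ + 1 := by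
    rw [← cutPoints_self hp]
    exact hζ.monotoneOn (hmem hi) (hmem le_rfl) hi
  have hj0 : ξ ⟨0, hp⟩ ≤ ξ j := hmono.monotone (Fin.le_def.2 (Nat.zero_le j))
  have hk : k = 0 := by
    have hk₁ : (-1 : ℤ) < k := by exact_mod_cast (by linarith [hspan j] : (-1 : ℝ) < k)
    have hk₂ : k < 1 := by exact_mod_cast (by linarith : (k : ℝ) < 1)
    omega
  subst hk
  rw [Int.cast_zero, add_zero, ← hj] at hlt hle
  have hij := (hζ.lt_iff_lt (hmem hi.le) (hmem j.isLt.le)).1 hlt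
  have hji := (hζ.lt_iff_lt (hmem j.isLt.le) (hmem hi)).1 (hle.trans_lt hxi)
  omega

theorem apply_cutPoints_eq_apply_succ_add (hmono : StrictMono ξ)
    (hspan : ∀ i, ξ i < ξ ⟨0, hp⟩ + 1) (hconst : ConstantBetweenTranslates ξ f)
    (hjump : ∀ i, Tendsto f (𝓝[<] (ξ i)) (𝓝 (f (ξ i) + d i))) {i : ℕ} (hi : i + 1 < p) :
    f (cutPoints ξ hp i) = f (cutPoints ξ hp (i + 1)) + natExtend d 0 (i + 1) := by
  have hlt : cutPoints ξ hp i < cutPoints ξ hp (i + 1) :=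
    cutPoints_strictMonoOn hp hmono hspan (Set.mem_Iic.2 (by omega)) (Set.mem_Iic.2 hi.le)
      i.lt_succ_self
  have hleft : Tendsto f (𝓝[<] (cutPoints ξ hp (i + 1))) (𝓝 (f (cutPoints ξ hp i))) := by
    refine tendsto_const_nhds.congr' ?_
    filter_upwards [Ioo_mem_nhdsLT hlt] with x hx
    exact (eqOn_Ico_cutPoints hp hmono hspan hconst (by omega) ⟨hx.1.le, hx.2⟩).symm
  rw [cutPoints_of_lt hp hi] at hleft ⊢
  rw [natExtend_of_lt hi]
  exact tendsto_nhds_unique hleft (hjump _)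

theorem integral_eq_apply_add_sum_Iic (hper : Function.Periodic f 1) (hmono : StrictMono ξ)
    (hspan : ∀ i, ξ i < ξ ⟨0, hp⟩ + 1) (hconst : ConstantBetweenTranslates ξ f)
    (hjump : ∀ i, Tendsto f (𝓝[<] (ξ i)) (𝓝 (f (ξ i) + d i))) (hsum : ∑ i, d i = 0)
    (k : Fin p) :
    ∫ x in (0 : ℝ)..1, f x = f (ξ k) + ∑ j ∈ Iic k, d j + ∑ j, d j * ξ j := by
  have hζ := cutPoints_strictMonoOn hp hmono hspan
  have hvalues : ∀ i < p, f (cutPoints ξ hp i) + ∑ j ∈ range (i + 1), natExtend d 0 j =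
      f (cutPoints ξ hp 0) + natExtend d 0 0 :=
    add_partialSum_eq_of_eq_add fun i hi =>
      apply_cutPoints_eq_apply_succ_add hp hmono hspan hconst hjump hi
  have hperiod : ∫ x in (0 : ℝ)..1, f x = ∫ x in cutPoints ξ hp 0..cutPoints ξ hp p, f x := by
    rw [cutPoints_of_lt hp hp, cutPoints_self, hper.intervalIntegral_add_eq _ 0, zero_add]
  have hmoment : ∑ j ∈ range p, natExtend d 0 j * cutPoints ξ hp j = ∑ j, d j * ξ j := by
    rw [← Fin.sum_univ_eq_sum_range]
    exact sum_congr rfl fun j _ => by rw [natExtend_of_lt j.isLt, cutPoints_of_lt hp j.isLt]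
  rw [hperiod, integral_eq_sum_of_eqOn_Ico
      (fun i hi => hζ.monotoneOn (Set.mem_Iic.2 hi.le) (Set.mem_Iic.2 hi) i.le_succ)
      (fun i hi => eqOn_Ico_cutPoints hp hmono hspan hconst hi),
    sum_mul_sub_eq_of_add_partialSum_eq hvalues (by rw [sum_range_natExtend, hsum]),
    ← hvalues k k.isLt, cutPoints_self, cutPoints_of_lt hp hp, sum_range_succ_natExtend,
    cutPoints_of_lt hp k.isLt, hmoment]
  ring

theorem exists_apply_eq_apply_discontinuity (hper : Function.Periodic f 1)
    (hmono : StrictMono ξ) (hspan : ∀ i, ξ i < ξ ⟨0, hp⟩ + 1)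
    (hconst : ConstantBetweenTranslates ξ f) (x : ℝ) : ∃ k, f x = f (ξ k) := by
  have hy : f (toIcoMod one_pos (ξ ⟨0, hp⟩) x) = f x := by
    rw [← self_sub_toIcoDiv_zsmul]
    exact hper.sub_zsmul_eq _
  have hmem := toIcoMod_mem_Ico one_pos (ξ ⟨0, hp⟩) x
  obtain ⟨k, hk, hyk⟩ := exists_mem_Ico_succ_of_mem_Ico
    ⟨(cutPoints_of_lt hp hp).trans_le hmem.1, hmem.2.trans_eq (cutPoints_self hp).symm⟩
  refine ⟨⟨k, hk⟩, ?_⟩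
  rw [← hy, eqOn_Ico_cutPoints hp hmono hspan hconst hk hyk, cutPoints_of_lt hp hk]

end Circle

theorem stmt7_general
    (p : ℕ) (hp : 0 < p) (ξ : Fin p → ℝ) (d : Fin p → ℝ)
    (hmono : StrictMono ξ) (hξ0 : 0 ≤ ξ ⟨0, hp⟩) (hξ1 : ξ ⟨p - 1, Nat.sub_lt hp one_pos⟩ < 1)
    (hsum : ∑ i, d i = 0)
    (f : ℝ → ℝ) (hper : Function.Periodic f 1)
    -- f is constant on arcs containing no translate of a discontinuity point
    (hconst : ∀ x y : ℝ, x ≤ y →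
      (∀ (i : Fin p) (k : ℤ), ¬ (x < ξ i + (k : ℝ) ∧ ξ i + (k : ℝ) ≤ y)) → f x = f y)
    -- the jump of f at ξᵢ (left limit minus right limit) equals dᵢ
    (hjump : ∀ (i : Fin p) (k : ℤ),
      Tendsto f (𝓝[<] (ξ i + (k : ℝ))) (𝓝 (f (ξ i + (k : ℝ)) + d i)))
    (a : ℝ) (hattain : ∃ x, f x = a) :
    ∃ n : Fin p → ℤ,
      ∫ x in (0:ℝ)..1, f x = a + ∑ i, d i * ξ i + ∑ i, (n i : ℝ) * d i := by
  have hspan : ∀ i, ξ i < ξ ⟨0, hp⟩ + 1 := fun i =>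
    (hmono.monotone (Fin.le_def.2 (Nat.le_pred_of_lt i.isLt))).trans_lt (by linarith)
  have hjump₀ : ∀ i, Tendsto f (𝓝[<] (ξ i)) (𝓝 (f (ξ i) + d i)) := fun i => by
    simpa using hjump i 0
  obtain ⟨x, rfl⟩ := hattain
  obtain ⟨k, hk⟩ := exists_apply_eq_apply_discontinuity hp hper hmono hspan hconst x
  refine ⟨fun j => if j ≤ k then 1 else 0, ?_⟩
  rw [integral_eq_apply_add_sum_Iic hp hper hmono hspan hconst hjump₀ hsum k, hk]
  simp only [Int.cast_ite, Int.cast_one, Int.cast_zero, ite_mul, one_mul, zero_mul, sum_ite,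
    filter_ge_eq_Iic, not_le, sum_const_zero, add_zero]
  ring

/-- Let f : 𝕋 → ℝ (1-periodic on ℝ) be piecewise constant and right-continuous
with discontinuities 0 ≤ ξ₁ < … < ξ_p < 1, jumps dᵢ, and Σ dᵢ = 0, and let a be
the minimal value of f.  Then ∫ f dλ ∈ a + Σᵢ dᵢξᵢ + Σᵢ ℤdᵢ. -/
theorem stmt7 (α : ℝ) (hα : Irrational α)
    (p : ℕ) (hp : 0 < p) (ξ : Fin p → ℝ) (d : Fin p → ℝ)
    (hmono : StrictMono ξ) (hξ0 : 0 ≤ ξ ⟨0, hp⟩) (hξ1 : ξ ⟨p - 1, Nat.sub_lt hp one_pos⟩ < 1)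
    (hd : ∀ i, d i ≠ 0) (hsum : ∑ i, d i = 0)
    (f : ℝ → ℝ) (hper : Function.Periodic f 1)
    -- f is constant on arcs containing no translate of a discontinuity point
    (hconst : ∀ x y : ℝ, x ≤ y →
      (∀ (i : Fin p) (k : ℤ), ¬ (x < ξ i + (k : ℝ) ∧ ξ i + (k : ℝ) ≤ y)) → f x = f y)
    -- f is right-continuous
    (hrc : ∀ x : ℝ, ContinuousWithinAt f (Set.Ici x) x)
    -- the jump of f at ξᵢ (left limit minus right limit) equals dᵢ
    (hjump : ∀ (i : Fin p) (k : ℤ),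
      Tendsto f (𝓝[<] (ξ i + (k : ℝ))) (𝓝 (f (ξ i + (k : ℝ)) + d i)))
    (a : ℝ) (hmin : ∀ x, a ≤ f x) (hattain : ∃ x, f x = a) :
    ∃ n : Fin p → ℤ,
      ∫ x in (0:ℝ)..1, f x = a + ∑ i, d i * ξ i + ∑ i, (n i : ℝ) * d i :=
  stmt7_general p hp ξ d hmono hξ0 hξ1 hsum f hper hconst hjump a hattain
end

section
/- Let α be irrational with convergent denominators (qₙ) and let f : 𝕋 → ℝ be piecewise constant, right-continuous, with discontinuities ξ₁, …, ξ_p and jumps dᵢ satisfying Σᵢ dᵢ = 0. Then for every n and every x ∈ 𝕋, the difference f^{(qₙ)}(x) − f^{(qₙ)}(0) belongs to the finite set D = {Σᵢ εᵢ dᵢ : εᵢ ∈ {−2,−1,0,1,2}}. -/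
/-!
Write `q α = P + φ` with `P/q` the convergent, so that `q |φ| < 1`. For `j < q` this gives
`q (j α + c) = (m + j P) + r_j` with `r_j ∈ [0, 2)`, for an integer `m` chosen according to the
sign of `φ`; as `P` is coprime to `q`, the residues of `m + j P` run through `0, …, q - 1` exactly
once. Hence the number `N` of `j < q` with `{j α + c} < x` differs from `q x` by less than `2`
(Denjoy–Koksma). Applied with `x = {x₀}` and `c = {x₀} - ξᵢ`, this counts the jumps of `f`
crossed between `j α` and `j α + x₀`, so `f⁽q⁾(0) - f⁽q⁾(x₀) = ∑ᵢ Nᵢ dᵢ`; as `∑ᵢ dᵢ = 0`, the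
`Nᵢ` may be replaced by `⌊q {x₀}⌋ - Nᵢ ∈ [-2, 2]`.
-/

open scoped Classical

open Finset

lemma Set.BijOn.card_filter_comp {α β : Type*} {s : Finset α} {t : Finset β} {k : α → β}
    (hk : Set.BijOn k s t) (Q : β → Prop) [DecidablePred Q] :
    #{a ∈ s | Q (k a)} = #{b ∈ t | Q b} := by
  refine card_nbij k (fun a ha => ?_) (hk.injOn.mono (Finset.coe_subset.2 (filter_subset _ _)))
    (fun b hb => ?_)
  · simp only [coe_filter, Set.mem_ofPred_eq] at ha ⊢
    exact ⟨hk.mapsTo ha.1, ha.2⟩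
  · simp only [coe_filter, Set.mem_ofPred_eq] at hb
    obtain ⟨a, ha, rfl⟩ := hk.surjOn hb.1
    exact ⟨a, by simpa using ⟨ha, hb.2⟩, rfl⟩

lemma bijOn_toNat_emod_add_mul {q : ℕ} (hq : 0 < q) (m : ℤ) {P : ℤ}
    (hP : IsCoprime (q : ℤ) P) :
    Set.BijOn (fun j : ℕ => ((m + j * P) % q).toNat) (range q) (range q) := by
  have hq' : (0 : ℤ) < q := by exact_mod_cast hq
  have hmaps : Set.MapsTo (fun j : ℕ => ((m + j * P) % q).toNat) (range q) (range q) := by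
    intro j _
    rw [coe_range, Set.mem_Iio]
    show ((m + j * P) % q).toNat < q
    have := Int.emod_nonneg (m + j * P) hq'.ne'
    have := Int.emod_lt_of_pos (m + j * P) hq'
    omega
  refine ((finite_toSet _).injOn_iff_bijOn_of_mapsTo hmaps).1 fun j₁ hj₁ j₂ hj₂ h => ?_
  simp only [coe_range, Set.mem_Iio] at hj₁ hj₂
  have hmod : m + j₁ * P ≡ m + j₂ * P [ZMOD q] := by
    have := Int.emod_nonneg (m + j₁ * P) hq'.ne'
    have := Int.emod_nonneg (m + j₂ * P) hq'.ne'
    simp only at h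
    show (m + j₁ * P) % q = (m + j₂ * P) % q
    omega
  have hdvd : (q : ℤ) ∣ (j₂ - j₁ : ℤ) :=
    hP.dvd_of_dvd_mul_right (by simpa [sub_mul] using hmod.dvd)
  have := Int.eq_zero_of_abs_lt_dvd hdvd (by rw [abs_lt]; omega)
  omega

lemma sub_one_lt_card_filter_range_add_one_le {q : ℕ} {t : ℝ} (ht : t ≤ q) :
    t - 1 < #((range q).filter fun i : ℕ => (i : ℝ) + 1 ≤ t) := by
  have hsub : range (min q ⌊t⌋₊) ⊆ (range q).filter fun i : ℕ => (i : ℝ) + 1 ≤ t := by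
    intro i hi
    rw [mem_range, lt_min_iff] at hi
    rw [mem_filter, mem_range]
    exact ⟨hi.1, by exact_mod_cast (Nat.le_floor_iff' i.succ_ne_zero).1 hi.2⟩
  calc t - 1 < min q ⌊t⌋₊ := by
        rw [Nat.cast_min]
        exact lt_min (by linarith) (by linarith [Nat.lt_floor_add_one t])
    _ ≤ _ := by exact_mod_cast card_range (min q ⌊t⌋₊) ▸ card_le_card hsub

lemma fract_div_lt_iff_lt_mul {q : ℕ} {y : ℝ} (hy0 : 0 ≤ y) (hyq : y < q) (x : ℝ) :
    Int.fract (y / q) < x ↔ y < q * x := by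
  have hq : (0 : ℝ) < q := hy0.trans_lt hyq
  rw [Int.fract_eq_self.2 ⟨by positivity, (div_lt_one hq).2 hyq⟩, div_lt_iff₀' hq]

section PerturbedPermutation

variable {q : ℕ} {k : ℕ → ℕ} {r : ℕ → ℝ} {x : ℝ}

lemma card_filter_fract_add_div_lt_lt (hk : Set.BijOn k (range q) (range q))
    (hr : ∀ j < q, r j ∈ Set.Ico 0 2) (hx : 0 ≤ x) :
    (#((range q).filter fun j : ℕ => Int.fract ((k j + r j) / q) < x) : ℝ) < q * x + 2 := by
  set S := insert (q - 1) (range ⌈(q : ℝ) * x⌉₊)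
  have hsub : ((range q).filter fun j : ℕ => Int.fract ((k j + r j) / q) < x) ⊆
      (range q).filter fun j : ℕ => k j ∈ S := by
    intro j hj
    rw [mem_filter, mem_range] at hj
    refine mem_filter.2 ⟨mem_range.2 hj.1, ?_⟩
    rw [mem_insert, mem_range, Nat.lt_ceil]
    by_contra! hcon
    have hkj : k j < q := by simpa using hk.mapsTo (by simpa using hj.1)
    have hkj2 : (k j : ℝ) + 2 ≤ q := by exact_mod_cast (show k j + 2 ≤ q by omega)
    have hrj := hr j hj.1
    have hlt := (fract_div_lt_iff_lt_mul (by linarith [hrj.1]) (by linarith [hrj.2]) x).1 hj.2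
    linarith [hrj.1]
  have hcard : #((range q).filter fun j : ℕ => k j ∈ S) ≤ ⌈(q : ℝ) * x⌉₊ + 1 := by
    rw [hk.card_filter_comp (· ∈ S)]
    exact (card_le_card fun i hi => (mem_filter.1 hi).2).trans
      ((card_insert_le _ _).trans (by rw [card_range]))
  have : (#((range q).filter fun j : ℕ => Int.fract ((k j + r j) / q) < x) : ℝ) ≤
      ⌈(q : ℝ) * x⌉₊ + 1 := by
    exact_mod_cast (card_le_card hsub).trans hcard
  linarith [Nat.ceil_lt_add_one (mul_nonneg (Nat.cast_nonneg q) hx)]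

lemma sub_two_lt_card_filter_fract_add_div_lt (hk : Set.BijOn k (range q) (range q))
    (hr : ∀ j < q, r j ∈ Set.Ico 0 2) (hx : x ≤ 1) :
    (q : ℝ) * x - 2 < #((range q).filter fun j : ℕ => Int.fract ((k j + r j) / q) < x) := by
  have hqx : (q : ℝ) * x ≤ q := mul_le_of_le_one_right (Nat.cast_nonneg q) hx
  have hsub : ((range q).filter fun j : ℕ => (k j : ℝ) + 1 ≤ q * x - 1) ⊆
      (range q).filter fun j : ℕ => Int.fract ((k j + r j) / q) < x := by
    intro j hj
    rw [mem_filter, mem_range] at hj ⊢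
    have hrj := hr j hj.1
    exact ⟨hj.1, (fract_div_lt_iff_lt_mul (by positivity [hrj.1]) (by linarith [hrj.2]) x).2
      (by linarith [hrj.2])⟩
  have hcount := sub_one_lt_card_filter_range_add_one_le (q := q) (t := q * x - 1) (by linarith)
  rw [← hk.card_filter_comp] at hcount
  have : (#((range q).filter fun j : ℕ => (k j : ℝ) + 1 ≤ q * x - 1) : ℝ) ≤
      #((range q).filter fun j : ℕ => Int.fract ((k j + r j) / q) < x) := by
    exact_mod_cast card_le_card hsub
  linarith

theorem abs_card_filter_fract_add_div_lt_sub_mul_lt_two (hk : Set.BijOn k (range q) (range q))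
    (hr : ∀ j < q, r j ∈ Set.Ico 0 2) (hx : x ∈ Set.Icc 0 1) :
    |(#((range q).filter fun j : ℕ => Int.fract ((k j + r j) / q) < x) : ℝ) - q * x| < 2 :=
  abs_sub_lt_iff.2 ⟨by linarith [card_filter_fract_add_div_lt_lt hk hr hx.1],
    by linarith [sub_two_lt_card_filter_fract_add_div_lt hk hr hx.2]⟩

end PerturbedPermutation

lemma exists_int_sub_add_mul_mem_Ico (y : ℝ) {N : ℕ} {φ : ℝ} (hφ : N * |φ| < 1) :
    ∃ m : ℤ, ∀ j ≤ N, y - m + j * φ ∈ Set.Ico (0 : ℝ) 2 := by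
  have hjφ : ∀ j ≤ N, |(j : ℝ) * φ| < 1 := fun j hj => by
    rw [abs_mul, Nat.abs_cast]
    exact lt_of_le_of_lt (mul_le_mul_of_nonneg_right (by exact_mod_cast hj) (abs_nonneg _)) hφ
  rcases le_or_gt 0 φ with hφ0 | hφ0
  · refine ⟨⌊y⌋, fun j hj => ?_⟩
    have := (abs_lt.1 (hjφ j hj)).2
    have : 0 ≤ (j : ℝ) * φ := by positivity
    constructor <;> linarith [Int.floor_le y, Int.lt_floor_add_one y]
  · refine ⟨⌊y⌋ - 1, fun j hj => ?_⟩
    have := (abs_lt.1 (hjφ j hj)).1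
    have : (j : ℝ) * φ ≤ 0 := mul_nonpos_of_nonneg_of_nonpos (Nat.cast_nonneg _) hφ0.le
    push_cast
    constructor <;> linarith [Int.floor_le y, Int.lt_floor_add_one y]

theorem abs_card_filter_fract_lt_sub_mul_lt_two {q : ℕ} (hq : 0 < q) {P : ℤ}
    (hP : IsCoprime (q : ℤ) P) {α : ℝ} (hα : |α - P / q| < 1 / q ^ 2) (c : ℝ) {x : ℝ}
    (hx : x ∈ Set.Icc 0 1) :
    |(#((range q).filter fun j : ℕ => Int.fract (j * α + c) < x) : ℝ) - q * x| < 2 := by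
  have hqR : (0 : ℝ) < q := by exact_mod_cast hq
  set φ : ℝ := q * α - P
  have hφ : (q : ℝ) * |φ| < 1 := by
    have hφ' : φ = q * (α - P / q) := by rw [mul_sub, mul_div_cancel₀ _ hqR.ne']
    rw [hφ', abs_mul, abs_of_pos hqR, ← mul_assoc, ← sq]
    calc (q : ℝ) ^ 2 * |α - P / q| < q ^ 2 * (1 / q ^ 2) := by gcongr
      _ = 1 := by field_simp
  obtain ⟨m, hm⟩ := exists_int_sub_add_mul_mem_Ico (q * c) hφ
  have hfract : ∀ j : ℕ, Int.fract (j * α + c) =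
      Int.fract ((((m + j * P) % q).toNat + (q * c - m + j * φ)) / q) := fun j => by
    rw [Int.fract_eq_fract]
    refine ⟨(m + j * P) / q, ?_⟩
    have hmod : (((m + j * P) % q).toNat : ℝ) = m + j * P - q * ((m + j * P) / q : ℤ) := by
      rw [← Int.cast_natCast, Int.toNat_of_nonneg (Int.emod_nonneg _ (by omega)), Int.emod_def]
      push_cast
      ring
    rw [hmod]
    field_simp
    ring
  simp_rw [hfract]
  exact abs_card_filter_fract_add_div_lt_sub_mul_lt_two (bijOn_toNat_emod_add_mul hq m hP)
    (fun j hj => hm j hj.le) hx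

section ContinuantRecurrence

variable {a : ℕ → ℕ}

lemma monotone_of_add_mul_rec {u : ℕ → ℕ} (ha : ∀ n, 1 ≤ a (n + 2)) (h01 : u 0 ≤ u 1)
    (hu : ∀ n, u (n + 2) = a (n + 2) * u (n + 1) + u n) : Monotone u := by
  refine monotone_nat_of_le_succ fun n => ?_
  cases n with
  | zero => exact h01
  | succ n => rw [hu n]; nlinarith [ha n]

lemma cross_sub_cross_eq_neg_one_pow_mul {u v : ℕ → ℕ}
    (hu : ∀ n, u (n + 2) = a (n + 2) * u (n + 1) + u n)
    (hv : ∀ n, v (n + 2) = a (n + 2) * v (n + 1) + v n) (n : ℕ) :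
    (u (n + 1) * v n - u n * v (n + 1) : ℤ) = (-1) ^ n * (u 1 * v 0 - u 0 * v 1) := by
  induction n with
  | zero => simp
  | succ n ih =>
    rw [hu n, hv n, pow_succ]
    push_cast
    linear_combination (-1 : ℤ) * ih

lemma isCoprime_of_add_mul_rec {u v : ℕ → ℕ}
    (hu : ∀ n, u (n + 2) = a (n + 2) * u (n + 1) + u n)
    (hv : ∀ n, v (n + 2) = a (n + 2) * v (n + 1) + v n)
    (hu0 : u 0 = 1) (hv0 : v 0 = 0) (hv1 : v 1 = 1) (n : ℕ) :
    IsCoprime (u n : ℤ) (v n) := by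
  have hdet := cross_sub_cross_eq_neg_one_pow_mul hv hu n
  rw [hu0, hv0, hv1] at hdet
  refine ⟨(-1) ^ n * v (n + 1), -(-1) ^ n * u (n + 1), ?_⟩
  linear_combination (-1) ^ n * hdet + (by rw [← mul_pow]; simp : ((-1 : ℤ) ^ n * (-1) ^ n = 1))

end ContinuantRecurrence

lemma exists_int_mem_Ioc_iff_fract_lt (z s : ℝ) :
    (∃ k : ℤ, z - s < k ∧ (k : ℝ) ≤ z) ↔ Int.fract z < s := by
  constructor
  · rintro ⟨k, hk, hkz⟩
    have : (k : ℝ) ≤ ⌊z⌋ := by exact_mod_cast Int.le_floor.2 hkz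
    rw [Int.fract]
    linarith
  · intro h
    exact ⟨⌊z⌋, by rw [Int.fract] at h; linarith, Int.floor_le z⟩

section StepFunction

variable {ι : Type*} [Fintype ι] {ξ d : ι → ℝ} {f : ℝ → ℝ}

lemma sub_eq_sum_ite_fract_lt
    (hstep : ∀ x y : ℝ, x < y → y - x < 1 →
      f x - f y = ∑ i, if (∃ k : ℤ, x < ξ i + (k : ℝ) ∧ ξ i + (k : ℝ) ≤ y) then d i else 0)
    (y : ℝ) {s : ℝ} (hs : s ∈ Set.Ico 0 1) :
    f y - f (y + s) = ∑ i, if Int.fract (y + (s - ξ i)) < s then d i else 0 := by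
  rcases hs.1.eq_or_lt with rfl | hs0
  · rw [add_zero, sub_self]
    exact (sum_eq_zero fun i _ => if_neg (Int.fract_nonneg _).not_gt).symm
  rw [hstep y (y + s) (by linarith) (by linarith [hs.2])]
  refine sum_congr rfl fun i _ => if_congr ?_ rfl rfl
  rw [← exists_int_mem_Ioc_iff_fract_lt]
  exact exists_congr fun k => and_congr (by constructor <;> intro <;> linarith)
    (by constructor <;> intro <;> linarith)

lemma sum_sub_sum_eq_sum_card_mul (hper : Function.Periodic f 1)
    (hstep : ∀ x y : ℝ, x < y → y - x < 1 →
      f x - f y = ∑ i, if (∃ k : ℤ, x < ξ i + (k : ℝ) ∧ ξ i + (k : ℝ) ≤ y) then d i else 0)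
    (α x : ℝ) (m : ℕ) :
    ∑ j ∈ range m, f (0 + j * α) - ∑ j ∈ range m, f (x + j * α) =
      ∑ i, (#((range m).filter fun j : ℕ =>
        Int.fract (j * α + (Int.fract x - ξ i)) < Int.fract x) : ℝ) * d i := by
  have hterm : ∀ j : ℕ, f (0 + j * α) - f (x + j * α) =
      ∑ i, if Int.fract (j * α + (Int.fract x - ξ i)) < Int.fract x then d i else 0 := by
    intro j
    have hx : x + j * α = j * α + Int.fract x + ⌊x⌋ * 1 := by
      rw [mul_one, Int.fract]; ring
    rw [hx, (hper.int_mul ⌊x⌋) _, zero_add]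
    exact sub_eq_sum_ite_fract_lt hstep _ ⟨Int.fract_nonneg x, Int.fract_lt_one x⟩
  rw [← sum_sub_distrib, sum_congr rfl fun j _ => hterm j, sum_comm]
  refine sum_congr rfl fun i _ => ?_
  rw [← sum_filter, sum_const, nsmul_eq_mul]

end StepFunction

lemma exists_abs_le_two_sum_mul_eq_neg {ι : Type*} [Fintype ι] {d : ι → ℝ}
    (hd : ∑ i, d i = 0) {N : ι → ℕ} {t : ℝ} (hN : ∀ i, |(N i : ℝ) - t| < 2) :
    ∃ ε : ι → ℤ, (∀ i, |ε i| ≤ 2) ∧ ∑ i, (ε i : ℝ) * d i = -∑ i, (N i : ℝ) * d i := by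
  refine ⟨fun i => ⌊t⌋ - N i, fun i => ?_, ?_⟩
  · show |⌊t⌋ - (N i : ℤ)| ≤ 2
    have hNt := abs_lt.1 (hN i)
    have h1 : ((⌊t⌋ - N i : ℤ) : ℝ) < 3 := by push_cast; linarith [Int.floor_le t]
    have h2 : (-3 : ℝ) < ((⌊t⌋ - N i : ℤ) : ℝ) := by push_cast; linarith [Int.lt_floor_add_one t]
    have h1' : ⌊t⌋ - (N i : ℤ) < 3 := by exact_mod_cast h1
    have h2' : -3 < ⌊t⌋ - (N i : ℤ) := by exact_mod_cast h2
    rw [abs_le]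
    omega
  · simp only [Int.cast_sub, Int.cast_natCast, sub_mul, sum_sub_distrib, ← mul_sum, hd, mul_zero,
      zero_sub]

theorem stmt9_general (α : ℝ) (a : ℕ → ℕ) (pc q : ℕ → ℕ)
    (ha : ∀ n, 1 ≤ n → 1 ≤ a n)
    (hq0 : q 0 = 1) (hq1 : q 1 = a 1) (hqrec : ∀ n, q (n + 2) = a (n + 2) * q (n + 1) + q n)
    (hp0 : pc 0 = 0) (hp1 : pc 1 = 1) (hprec : ∀ n, pc (n + 2) = a (n + 2) * pc (n + 1) + pc n)
    (happrox : ∀ n, 1 / (2 * (q n : ℝ) * q (n + 1)) < |α - (pc n : ℝ) / q n| ∧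
      |α - (pc n : ℝ) / q n| < 1 / ((q n : ℝ) * q (n + 1)))
    (p : ℕ) (ξ : Fin p → ℝ) (d : Fin p → ℝ)
    (hsum : ∑ i, d i = 0)
    (f : ℝ → ℝ) (hper : Function.Periodic f 1)
    -- f is a right-continuous step function with jump dᵢ at ξᵢ:
    (hstep : ∀ x y : ℝ, x < y → y - x < 1 →
      f x - f y = ∑ i, if (∃ k : ℤ, x < ξ i + (k : ℝ) ∧ ξ i + (k : ℝ) ≤ y) then d i else 0) :
    ∀ n : ℕ, ∀ x : ℝ, ∃ ε : Fin p → ℤ, (∀ i, |ε i| ≤ 2) ∧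
      (∑ j ∈ Finset.range (q n), f (x + (j : ℝ) * α)) -
        (∑ j ∈ Finset.range (q n), f ((0 : ℝ) + (j : ℝ) * α)) =
      ∑ i, (ε i : ℝ) * d i := by
  intro n x
  have hmono : Monotone q :=
    monotone_of_add_mul_rec (fun n => ha (n + 2) (by omega))
      (by rw [hq0, hq1]; exact ha 1 le_rfl) hqrec
  have hq : 0 < q n := by have := hmono n.zero_le; omega
  have happrox_sq : |α - ((pc n : ℤ) : ℝ) / q n| < 1 / (q n : ℝ) ^ 2 := by
    calc |α - ((pc n : ℤ) : ℝ) / q n| < 1 / ((q n : ℝ) * q (n + 1)) := by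
          rw [Int.cast_natCast]; exact (happrox n).2
      _ ≤ 1 / (q n : ℝ) ^ 2 := by
          rw [sq]; gcongr; exact_mod_cast hmono n.le_succ
  have hcount := fun i => abs_card_filter_fract_lt_sub_mul_lt_two hq
    (isCoprime_of_add_mul_rec hqrec hprec hq0 hp0 hp1 n) happrox_sq (Int.fract x - ξ i)
    ⟨Int.fract_nonneg x, (Int.fract_lt_one x).le⟩
  obtain ⟨ε, hε, hεd⟩ := exists_abs_le_two_sum_mul_eq_neg hsum hcount
  refine ⟨ε, hε, ?_⟩
  rw [hεd, ← sum_sub_sum_eq_sum_card_mul hper hstep]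
  ring

/-- Let α be irrational with convergent denominators (qₙ) and f : 𝕋 → ℝ
piecewise constant, right-continuous, with discontinuities ξᵢ and jumps dᵢ,
Σ dᵢ = 0.  Then for every n and x, f⁽qₙ⁾(x) − f⁽qₙ⁾(0) lies in the finite set
D = {Σᵢ εᵢdᵢ : εᵢ ∈ {−2,…,2}}. -/
theorem stmt9 (α : ℝ) (hα : Irrational α) (a : ℕ → ℕ) (pc q : ℕ → ℕ)
    (ha : ∀ n, 1 ≤ n → 1 ≤ a n)
    (hq0 : q 0 = 1) (hq1 : q 1 = a 1) (hqrec : ∀ n, q (n + 2) = a (n + 2) * q (n + 1) + q n)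
    (hp0 : pc 0 = 0) (hp1 : pc 1 = 1) (hprec : ∀ n, pc (n + 2) = a (n + 2) * pc (n + 1) + pc n)
    (happrox : ∀ n, 1 / (2 * (q n : ℝ) * q (n + 1)) < |α - (pc n : ℝ) / q n| ∧
      |α - (pc n : ℝ) / q n| < 1 / ((q n : ℝ) * q (n + 1)))
    (p : ℕ) (hp : 0 < p) (ξ : Fin p → ℝ) (d : Fin p → ℝ)
    (hξ : ∀ i, ξ i ∈ Set.Ico (0 : ℝ) 1)
    (hsum : ∑ i, d i = 0)
    (f : ℝ → ℝ) (hper : Function.Periodic f 1)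
    -- f is a right-continuous step function with jump dᵢ at ξᵢ:
    (hstep : ∀ x y : ℝ, x < y → y - x < 1 →
      f x - f y = ∑ i, if (∃ k : ℤ, x < ξ i + (k : ℝ) ∧ ξ i + (k : ℝ) ≤ y) then d i else 0) :
    ∀ n : ℕ, ∀ x : ℝ, ∃ ε : Fin p → ℤ, (∀ i, |ε i| ≤ 2) ∧
      (∑ j ∈ Finset.range (q n), f (x + (j : ℝ) * α)) -
        (∑ j ∈ Finset.range (q n), f ((0 : ℝ) + (j : ℝ) * α)) =
      ∑ i, (ε i : ℝ) * d i :=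
  stmt9_general α a pc q ha hq0 hq1 hqrec hp0 hp1 hprec happrox p ξ d hsum f hper hstep
end

section
/- Suppose α has bounded partial quotients, so ‖jα‖ ≥ c/|j| for all j ≠ 0 and q_{n+1}/qₙ ≤ 1/c. Fix x ≠ y on the circle with 2/q_{s+1} ≤ ‖x−y‖ < 2/q_s. Then for each fixed ξ ∈ 𝕋, the number of j with 0 ≤ j < q_{s+4} such that ξ − jα lies in the arc (x, y] is at most 2/c⁵ + 1. -/
open scoped Classical

/-
The orbit points ξ − jα, 0 ≤ j < q_{s+4}, are pairwise c/q_{s+4}-separated modulo 1, because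
two of them differ by mα (mod 1) with 0 < |m| < q_{s+4}, and ‖mα‖ ≥ c/|m|. An arc of length
< 2/q_s ≤ 2/(c⁴ q_{s+4}) therefore holds at most (2/(c⁴ q_{s+4}))/(c/q_{s+4}) + 1 = 2/c⁵ + 1
of them.
-/

lemma card_le_div_add_one_of_separated {ι : Type*} (s : Finset ι) (f : ι → ℝ) {x y δ : ℝ}
    (hxy : x ≤ y) (hδ : 0 < δ) (hf : ∀ i ∈ s, f i ∈ Set.Ioc x y)
    (hsep : ∀ i ∈ s, ∀ j ∈ s, i ≠ j → δ ≤ |f i - f j|) :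
    (s.card : ℝ) ≤ (y - x) / δ + 1 := by
  -- Points sharing a cell `[x + nδ, x + (n+1)δ)` would be closer than δ.
  let cell : ι → ℕ := fun i => ⌊(f i - x) / δ⌋₊
  have hcell_mem : ∀ i ∈ s, cell i ∈ Finset.range (⌊(y - x) / δ⌋₊ + 1) := by
    intro i hi
    rw [Finset.mem_range, Nat.lt_succ_iff]
    exact Nat.floor_le_floor (div_le_div_of_nonneg_right (by linarith [(hf i hi).2]) hδ.le)
  have hcell_inj : Set.InjOn cell s := by
    intro i hi j hj hij
    by_contra hne
    have hclose : |(f i - x) / δ - (f j - x) / δ| < 1 :=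
      Int.abs_sub_lt_one_of_floor_eq_floor (by
        rw [← Int.natCast_floor_eq_floor (div_nonneg (by linarith [(hf i hi).1]) hδ.le),
          ← Int.natCast_floor_eq_floor (div_nonneg (by linarith [(hf j hj).1]) hδ.le)]
        exact congrArg _ hij)
    rw [← sub_div, sub_sub_sub_cancel_right, abs_div, abs_of_pos hδ, div_lt_one hδ] at hclose
    linarith [hsep i hi j hj hne]
  calc (s.card : ℝ) ≤ ((Finset.range (⌊(y - x) / δ⌋₊ + 1)).card : ℝ) := by
        exact_mod_cast Finset.card_le_card_of_injOn cell hcell_mem hcell_inj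
    _ ≤ (y - x) / δ + 1 := by
        rw [Finset.card_range, Nat.cast_add_one]
        gcongr
        exact Nat.floor_le (div_nonneg (sub_nonneg.mpr hxy) hδ.le)

lemma orbit_separated {α c ξ : ℝ} (hc : 0 ≤ c)
    (hbpq : ∀ j : ℤ, j ≠ 0 → c / |(j : ℝ)| ≤ |(j : ℝ) * α - round ((j : ℝ) * α)|)
    {Q m n : ℕ} (hm : m < Q) (hn : n < Q) (hmn : m ≠ n) (k l : ℤ) :
    c / Q ≤ |(ξ - m * α + k) - (ξ - n * α + l)| := by
  set d : ℤ := (n : ℤ) - m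
  have hd : d ≠ 0 := sub_ne_zero.mpr (Int.ofNat_injective.ne (Ne.symm hmn))
  have hdQ : |(d : ℝ)| ≤ Q := by
    have : |d| ≤ (Q : ℤ) := abs_sub_le_iff.mpr ⟨by omega, by omega⟩
    exact_mod_cast this
  have hd_pos : (0 : ℝ) < |(d : ℝ)| := abs_pos.mpr (Int.cast_ne_zero.mpr hd)
  calc c / Q ≤ c / |(d : ℝ)| := div_le_div_of_nonneg_left hc hd_pos hdQ
    _ ≤ |(d : ℝ) * α - round ((d : ℝ) * α)| := hbpq d hd
    _ ≤ |(d : ℝ) * α - ((l - k : ℤ) : ℝ)| := round_le _ _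
    _ = |(ξ - m * α + k) - (ξ - n * α + l)| := by
        congr 1
        push_cast [d]
        ring

lemma le_pow_mul_of_succ_le_mul {a : ℕ → ℝ} {r : ℝ} (hr : 0 ≤ r)
    (h : ∀ n, a (n + 1) ≤ r * a n) (s k : ℕ) : a (s + k) ≤ r ^ k * a s := by
  induction k with
  | zero => simp
  | succ k ih =>
    calc a (s + (k + 1)) ≤ r * a (s + k) := h (s + k)
      _ ≤ r * (r ^ k * a s) := mul_le_mul_of_nonneg_left ih hr
      _ = r ^ (k + 1) * a s := by ring

theorem stmt11_general (α : ℝ) (c : ℝ) (hc : 0 < c)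
    (hbpq : ∀ j : ℤ, j ≠ 0 → c / |(j : ℝ)| ≤ |(j : ℝ) * α - round ((j : ℝ) * α)|)
    (q : ℕ → ℕ) (hqpos : ∀ n, 0 < q n)
    (hratio : ∀ n, (q (n + 1) : ℝ) ≤ (1 / c) * q n)
    (s : ℕ) (x y : ℝ) (hxy : x < y)
    (hupp : y - x < 2 / (q s : ℝ))
    (ξ : ℝ) :
    (((Finset.range (q (s + 4))).filter
        (fun j => ∃ k : ℤ, x < ξ - (j : ℝ) * α + (k : ℝ) ∧
          ξ - (j : ℝ) * α + (k : ℝ) ≤ y)).card : ℝ) ≤ 2 / c ^ 5 + 1 := by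
  set Q := q (s + 4)
  have hQ : (0 : ℝ) < Q := by exact_mod_cast hqpos (s + 4)
  have hqs : (0 : ℝ) < q s := by exact_mod_cast hqpos s
  have hQ_le : (Q : ℝ) ≤ (1 / c) ^ 4 * q s :=
    le_pow_mul_of_succ_le_mul (a := fun n => (q n : ℝ)) (by positivity) hratio s 4
  set S := (Finset.range Q).filter
      (fun j => ∃ k : ℤ, x < ξ - (j : ℝ) * α + (k : ℝ) ∧ ξ - (j : ℝ) * α + (k : ℝ) ≤ y)
  -- `S` lives in `Finset ℝ`: the ascription `(j : ℝ)` makes Lean lift `Finset.range Q` through the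
  -- `Finset` monad, so its elements are the casts of `0, …, Q - 1`.
  have hS_nat : ∀ t ∈ S, ∃ n < Q, (n : ℝ) = t := fun t ht => by
    simpa [eq_comm] using (Finset.mem_filter.mp ht).1
  choose! k hk using fun t (ht : t ∈ S) => (Finset.mem_filter.mp ht).2
  calc (S.card : ℝ) ≤ (y - x) / (c / Q) + 1 := by
        refine card_le_div_add_one_of_separated S (fun t => ξ - t * α + k t) hxy.le
          (by positivity) hk fun t ht t' ht' hne => ?_
        obtain ⟨m, hm, rfl⟩ := hS_nat t ht
        obtain ⟨n, hn, rfl⟩ := hS_nat t' ht'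
        exact orbit_separated hc.le hbpq hm hn (by exact_mod_cast hne) _ _
    _ ≤ (2 / q s) * ((1 / c) ^ 4 * q s) / c + 1 := by
        rw [div_div_eq_mul_div]
        gcongr
    _ = 2 / c ^ 5 + 1 := by
        field_simp

/-- Suppose α has bounded partial quotients, so that ‖jα‖ ≥ c/|j| for all j ≠ 0
and q_{n+1}/qₙ ≤ 1/c for the convergent denominators qₙ.  Fix x ≠ y on the
circle (represented by reals x < y with y − x = ‖x−y‖) with
2/q_{s+1} ≤ ‖x−y‖ < 2/q_s.  Then for each ξ the number of j with 0 ≤ j < q_{s+4}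
and ξ − jα ∈ (x, y] is at most 2/c⁵ + 1. -/
theorem stmt11 (α : ℝ) (hα : Irrational α) (c : ℝ) (hc : 0 < c) (hc1 : c < 1)
    (hbpq : ∀ j : ℤ, j ≠ 0 → c / |(j : ℝ)| ≤ |(j : ℝ) * α - round ((j : ℝ) * α)|)
    (q : ℕ → ℕ) (hqpos : ∀ n, 0 < q n) (hqmono : Monotone q)
    (hratio : ∀ n, (q (n + 1) : ℝ) ≤ (1 / c) * q n)
    (s : ℕ) (x y : ℝ) (hxy : x < y) (hlen : y - x < 1)
    (hlow : 2 / (q (s + 1) : ℝ) ≤ y - x) (hupp : y - x < 2 / (q s : ℝ))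
    (ξ : ℝ) :
    (((Finset.range (q (s + 4))).filter
        (fun j => ∃ k : ℤ, x < ξ - (j : ℝ) * α + (k : ℝ) ∧
          ξ - (j : ℝ) * α + (k : ℝ) ≤ y)).card : ℝ) ≤ 2 / c ^ 5 + 1 :=
  stmt11_general α c hc hbpq q hqpos hratio s x y hxy hupp ξ
end

section
/- Let α be irrational and suppose ξ − ξ′ = (m₁ + m₂α)/h with m₁, m₂ ∈ ℤ, |m₂| ≤ H, 1 ≤ h ≤ H, and ξ − ξ′ ∉ ℤ + ℤα. Suppose w, w′ are nonnegative integers with ‖(ξ − wα) − (ξ′ − w′α)‖ < 2/q_s and 2/q_s < 1/H. Then h(w − w′) − m₂ ≠ 0 and ‖(h(w−w′) − m₂)α‖ < 2h/q_s ≤ 2H/q_s. -/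
/-!
Write `x = (ξ - wα) - (ξ' - w'α)` and `n = h(w - w') - m₂`; then `h x = m₁ - nα`.
If `n = 0` then `h x` is an integer while `‖x‖ < 1/H ≤ 1/h`, which forces `x ∈ ℤ`, and then
`ξ - ξ' = x + (w - w')α ∈ ℤ + ℤα`. Otherwise `‖nα‖ = ‖h x‖ ≤ h ‖x‖ < 2h/Q`.
-/

lemma distNearestInt_intCast_sub (m : ℤ) (x : ℝ) :
    distNearestInt (m - x) = distNearestInt x := by
  apply le_antisymm
  · calc distNearestInt (m - x) ≤ |(m - x) - ((m - round x : ℤ) : ℝ)| := round_le _ _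
      _ = distNearestInt x := by
        rw [distNearestInt, ← abs_neg]
        push_cast
        ring_nf
  · calc distNearestInt x ≤ |x - ((m - round ((m : ℝ) - x) : ℤ) : ℝ)| := round_le _ _
      _ = distNearestInt (m - x) := by
        rw [distNearestInt, ← abs_neg]
        push_cast
        ring_nf

lemma distNearestInt_natCast_mul_le (k : ℕ) (x : ℝ) :
    distNearestInt (k * x) ≤ k * distNearestInt x :=
  calc distNearestInt (k * x) ≤ |k * x - ((k * round x : ℤ) : ℝ)| := round_le _ _
    _ = |(k : ℝ) * (x - round x)| := by push_cast; ring_nf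
    _ = k * distNearestInt x := by rw [abs_mul, Nat.abs_cast, distNearestInt]

lemma round_eq_self_of_natCast_mul_eq_intCast {k : ℕ} (hk : 0 < k) {x : ℝ} {m : ℤ}
    (hkx : k * x = m) (hx : distNearestInt x < 1 / k) : (round x : ℝ) = x := by
  have hk' : (0 : ℝ) < k := by exact_mod_cast hk
  have hsmall : |((m - k * round x : ℤ) : ℝ)| < 1 := by
    calc |((m - k * round x : ℤ) : ℝ)| = k * distNearestInt x := by
          rw [distNearestInt, ← abs_of_pos hk', ← abs_mul]
          push_cast
          rw [← hkx]
          ring_nf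
      _ < k * (1 / k) := by gcongr
      _ = 1 := by field_simp
  have hzero : m - k * round x = 0 := Int.abs_lt_one_iff.mp (by exact_mod_cast hsmall)
  have : (k : ℝ) * (x - round x) = 0 := by
    rw [mul_sub, hkx]
    exact_mod_cast hzero
  linarith [(mul_eq_zero.mp this).resolve_left hk'.ne']

theorem stmt15_general (α : ℝ)
    (ξ ξ' : ℝ) (m₁ m₂ : ℤ) (h H : ℕ) (hh : 1 ≤ h) (hhH : h ≤ H)
    (hdiff : ξ - ξ' = ((m₁ : ℝ) + (m₂ : ℝ) * α) / h)
    (hnot : ¬ ∃ k k' : ℤ, ξ - ξ' = (k : ℝ) + (k' : ℝ) * α)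
    (w w' : ℕ) (Q : ℕ) (hQH : 2 / (Q : ℝ) < 1 / H)
    (hclose : distNearestInt ((ξ - (w : ℝ) * α) - (ξ' - (w' : ℝ) * α)) < 2 / (Q : ℝ)) :
    (h : ℤ) * ((w : ℤ) - (w' : ℤ)) - m₂ ≠ 0 ∧
    distNearestInt ((((h : ℤ) * ((w : ℤ) - (w' : ℤ)) - m₂ : ℤ) : ℝ) * α) < 2 * h / Q ∧
    2 * (h : ℝ) / Q ≤ 2 * (H : ℝ) / Q := by
  set x := (ξ - (w : ℝ) * α) - (ξ' - (w' : ℝ) * α)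
  set n : ℤ := (h : ℤ) * ((w : ℤ) - (w' : ℤ)) - m₂
  have hh' : (0 : ℝ) < h := by exact_mod_cast hh
  have hhH' : (h : ℝ) ≤ H := by exact_mod_cast hhH
  have hhx : (h : ℝ) * x = m₁ - n * α := by
    simp only [x, n, sub_sub_sub_comm ξ, ← sub_mul, hdiff]
    push_cast
    field_simp
    ring
  have hx : distNearestInt x < 1 / h :=
    hclose.trans (hQH.trans_le (one_div_le_one_div_of_le hh' hhH'))
  refine ⟨fun hn ↦ hnot ⟨round x, w - w', ?_⟩, ?_, by gcongr⟩
  · have hround :=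
      round_eq_self_of_natCast_mul_eq_intCast hh (m := m₁) (by simpa [hn] using hhx) hx
    rw [hround]
    push_cast
    ring
  · calc distNearestInt (n * α) = distNearestInt (h * x) := by
          rw [hhx, distNearestInt_intCast_sub]
      _ ≤ h * distNearestInt x := distNearestInt_natCast_mul_le h x
      _ < h * (2 / Q) := by gcongr
      _ = 2 * h / Q := by ring

/-- Let α be irrational and ξ − ξ′ = (m₁ + m₂α)/h with |m₂| ≤ H, 1 ≤ h ≤ H, and
ξ − ξ′ ∉ ℤ + ℤα.  If w, w′ ≥ 0 satisfy ‖(ξ − wα) − (ξ′ − w′α)‖ < 2/q_s where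
2/q_s < 1/H, then h(w−w′) − m₂ ≠ 0 and ‖(h(w−w′) − m₂)α‖ < 2h/q_s ≤ 2H/q_s. -/
theorem stmt15 (α : ℝ) (hα : Irrational α)
    (ξ ξ' : ℝ) (m₁ m₂ : ℤ) (h H : ℕ) (hh : 1 ≤ h) (hhH : h ≤ H) (hm₂ : |m₂| ≤ (H : ℤ))
    (hdiff : ξ - ξ' = ((m₁ : ℝ) + (m₂ : ℝ) * α) / h)
    (hnot : ¬ ∃ k k' : ℤ, ξ - ξ' = (k : ℝ) + (k' : ℝ) * α)
    (w w' : ℕ) (Q : ℕ) (hQ : 0 < Q) (hQH : 2 / (Q : ℝ) < 1 / H)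
    (hclose : distNearestInt ((ξ - (w : ℝ) * α) - (ξ' - (w' : ℝ) * α)) < 2 / (Q : ℝ)) :
    (h : ℤ) * ((w : ℤ) - (w' : ℤ)) - m₂ ≠ 0 ∧
    distNearestInt ((((h : ℤ) * ((w : ℤ) - (w' : ℤ)) - m₂ : ℤ) : ℝ) * α) < 2 * h / Q ∧
    2 * (h : ℝ) / Q ≤ 2 * (H : ℝ) / Q :=
  stmt15_general α ξ ξ' m₁ m₂ h H hh hhH hdiff hnot w w' Q hQH hclose
end
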